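/- arXiv:1512.00231 — 8 statements merged into one kernel-verified Lean document; each statement's English description precedes it below -/
import Mathlib

section
/- Let f : ℝ^N → ℝ be quasi-concave. Then for all t > 0, except for at most countably many values of t, the superlevel set L_t(f) = {x : f(x) ≥ t} equals the closure of the strict superlevel set {x ∈ ℝ^N : f(x) > t}. -/
open Filter Topology MeasureTheory

noncomputable section

/-- A function `f : ℝ^N → ℝ` is quasi-concave if it is nonnegative and all its
superlevel sets `{x | t ≤ f x}` for `t > 0` are empty or compact and convex. -/
def QuasiConcave {N : ℕ} (f : EuclideanSpace ℝ (Fin N) → ℝ) : Prop :=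
  (∀ x, 0 ≤ f x) ∧
  ∀ t : ℝ, 0 < t →
    {x | t ≤ f x} = ∅ ∨ (IsCompact {x | t ≤ f x} ∧ Convex ℝ {x | t ≤ f x})

/-- For a quasi-concave `f`, for all `t > 0` outside an at most countable set,
the superlevel set `{x | f x ≥ t}` equals the closure of `{x | f x > t}`. -/
theorem quasiConcave_level_eq_closure_strict {N : ℕ}
    (f : EuclideanSpace ℝ (Fin N) → ℝ) (hf : QuasiConcave f) :
    ∃ T : Set ℝ, T.Countable ∧
      ∀ t : ℝ, 0 < t → t ∉ T →
        {x | t ≤ f x} = closure {x | t < f x} := by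
  obtain ⟨hf0, hfc⟩ := hf
  by_cases hztriv : ∀ x, f x = 0
  · refine ⟨∅, Set.countable_empty, fun t ht _ => ?_⟩
    have h1 : {x : EuclideanSpace ℝ (Fin N) | t ≤ f x} = ∅ := by
      ext x; simp only [Set.mem_setOf_eq, Set.mem_empty_iff_false, iff_false, not_le, hztriv x]
      exact ht
    have h2 : {x : EuclideanSpace ℝ (Fin N) | t < f x} = ∅ := by
      ext x; simp only [Set.mem_setOf_eq, Set.mem_empty_iff_false, iff_false, not_lt, hztriv x]
      exact ht.le
    rw [h1, h2, closure_empty]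
  push_neg at hztriv
  obtain ⟨x₀, hx₀⟩ := hztriv
  have hx₀pos : 0 < f x₀ := (hf0 x₀).lt_of_ne (Ne.symm hx₀)
  -- f is bounded above
  have hbdd : BddAbove (Set.range f) := by
    by_contra hb
    rw [not_bddAbove_iff] at hb
    have hne : ∀ n : ℕ, {x | ((n : ℝ) + 1) ≤ f x}.Nonempty := by
      intro n
      obtain ⟨a, ⟨z, rfl⟩, hz⟩ := hb ((n : ℝ) + 1)
      exact ⟨z, hz.le⟩
    have hcomp : ∀ n : ℕ, IsCompact {x | ((n : ℝ) + 1) ≤ f x} := by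
      intro n
      rcases hfc ((n : ℝ) + 1) (by positivity) with he | ⟨hc, _⟩
      · exact absurd he (hne n).ne_empty
      · exact hc
    obtain ⟨z, hz⟩ := IsCompact.nonempty_iInter_of_sequence_nonempty_isCompact_isClosed
      (fun n => {x | ((n : ℝ) + 1) ≤ f x})
      (fun n z hz => by
        simp only [Set.mem_setOf_eq] at hz ⊢
        push_cast at hz
        linarith)
      hne (hcomp 0) (fun n => (hcomp n).isClosed)
    obtain ⟨n, hn⟩ := exists_nat_gt (f z)
    have hzn : ((n : ℝ) + 1) ≤ f z := Set.mem_iInter.1 hz n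
    linarith
  set M := sSup (Set.range f) with hMdef
  have hM : ∀ x, f x ≤ M := fun x => le_csSup hbdd (Set.mem_range_self x)
  have hMpos : 0 < M := lt_of_lt_of_le hx₀pos (hM x₀)
  -- the supremum is attained
  have hKM : {x | M ≤ f x}.Nonempty := by
    set t' : ℕ → ℝ := fun n => M - M / ((n : ℝ) + 2) with ht'
    have ht'pos : ∀ n, 0 < t' n := by
      intro n
      have h1 : M / ((n : ℝ) + 2) < M := by
        apply div_lt_self hMpos
        have : (0 : ℝ) ≤ (n : ℝ) := Nat.cast_nonneg n
        linarith
      simp only [ht']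
      linarith
    have ht'lt : ∀ n, t' n < M := by
      intro n
      have : 0 < M / ((n : ℝ) + 2) := by positivity
      simp only [ht']
      linarith
    have hne : ∀ n, {x | t' n ≤ f x}.Nonempty := by
      intro n
      obtain ⟨a, ⟨z, rfl⟩, hz⟩ := exists_lt_of_lt_csSup ⟨f x₀, Set.mem_range_self x₀⟩ (ht'lt n)
      exact ⟨z, hz.le⟩
    have hcomp : ∀ n, IsCompact {x | t' n ≤ f x} := by
      intro n
      rcases hfc (t' n) (ht'pos n) with he | ⟨hc, _⟩
      · exact absurd he (hne n).ne_empty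
      · exact hc
    obtain ⟨z, hz⟩ := IsCompact.nonempty_iInter_of_sequence_nonempty_isCompact_isClosed
      (fun n => {x | t' n ≤ f x})
      (fun n z hz => by
        simp only [Set.mem_setOf_eq] at hz ⊢
        have hmono : t' n ≤ t' (n + 1) := by
          simp only [ht']
          have h1 : M / ((n : ℝ) + 1 + 2) ≤ M / ((n : ℝ) + 2) := by
            apply div_le_div_of_nonneg_left hMpos.le (by positivity)
            linarith
          push_cast
          linarith
        linarith)
      hne (hcomp 0) (fun n => (hcomp n).isClosed)
    have hall : ∀ n, t' n ≤ f z := fun n => Set.mem_iInter.1 hz n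
    have hlim : Tendsto t' atTop (𝓝 M) := by
      have h0 : Tendsto (fun n : ℕ => M / ((n : ℝ) + 2)) atTop (𝓝 0) := by
        apply Tendsto.div_atTop tendsto_const_nhds
        exact tendsto_atTop_add_const_right _ 2 tendsto_natCast_atTop_atTop
      have := (tendsto_const_nhds (α := ℕ) (x := M)).sub h0
      simpa [ht'] using this
    exact ⟨z, le_of_tendsto' hlim hall⟩
  -- countable dense set
  obtain ⟨D, hDc, hDd⟩ := TopologicalSpace.exists_countable_dense (EuclideanSpace ℝ (Fin N))
  set g : EuclideanSpace ℝ (Fin N) → ℝ → ℝ :=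
    fun y s => Metric.infDist y {x | min s M ≤ f x} with hg
  have hmono : ∀ y, Monotone (g y) := by
    intro y s₁ s₂ h
    apply Metric.infDist_le_infDist_of_subset
    · intro z hz
      simp only [Set.mem_setOf_eq] at hz ⊢
      exact le_trans (min_le_min h le_rfl) hz
    · obtain ⟨xM, hxM⟩ := hKM
      exact ⟨xM, Set.mem_setOf_eq ▸ le_trans (min_le_right _ _) hxM⟩
  refine ⟨insert M (⋃ y ∈ D, {s | ¬ContinuousAt (g y) s}),
    (hDc.biUnion (fun y _ => (hmono y).countable_not_continuousAt)).insert M, ?_⟩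
  intro t ht htT
  have htM : t ≠ M := fun h => htT (by rw [h]; exact Set.mem_insert _ _)
  have hcont : ∀ y ∈ D, ContinuousAt (g y) t := by
    intro y hy
    by_contra hc
    exact htT (Set.mem_insert_of_mem _ (Set.mem_biUnion hy hc))
  rcases hfc t ht with he | ⟨hcompt, _⟩
  · have h2 : {x : EuclideanSpace ℝ (Fin N) | t < f x} = ∅ := by
      rw [Set.eq_empty_iff_forall_notMem] at he ⊢
      intro z hz
      have hz' : t < f z := hz
      exact he z (show t ≤ f z from hz'.le)
    rw [he, h2, closure_empty]
  · refine Set.Subset.antisymm ?_ (closure_minimal (fun z hz => (le_of_lt hz : t ≤ f z)) hcompt.isClosed)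
    intro x hx
    by_contra hxc
    have hxt : t ≤ f x := hx
    have htltM : t < M := lt_of_le_of_ne (le_trans hxt (hM x)) htM
    obtain ⟨a, ⟨x₁, rfl⟩, hx₁⟩ := exists_lt_of_lt_csSup ⟨f x₀, Set.mem_range_self x₀⟩ htltM
    set U := {x : EuclideanSpace ℝ (Fin N) | t < f x} with hU
    have hUne : U.Nonempty := ⟨x₁, hx₁⟩
    set δ := Metric.infDist x U with hδdef
    have hδ : 0 < δ := by
      rw [hδdef, ← Metric.infDist_closure]
      exact (isClosed_closure.notMem_iff_infDist_pos hUne.closure).1 hxc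
    obtain ⟨y, hyD, hyx⟩ := hDd.exists_dist_lt x (show (0:ℝ) < δ / 4 by linarith)
    have hgyt : g y t ≤ δ / 4 := by
      have hxmem : x ∈ {z | min t M ≤ f z} := le_trans (min_le_left _ _) hxt
      calc g y t ≤ dist y x := Metric.infDist_le_dist_of_mem hxmem
        _ = dist x y := dist_comm y x
        _ ≤ δ / 4 := hyx.le
    obtain ⟨ε, hε, hcl⟩ := Metric.continuousAt_iff.1 (hcont y hyD) (δ / 2) (by linarith)
    set s := min (t + ε / 2) (f x₁) with hs
    have hts : t < s := lt_min (by linarith) hx₁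
    have hsM : s ≤ M := le_trans (min_le_right _ _) (hM x₁)
    have hdist : dist s t < ε := by
      rw [Real.dist_eq, abs_of_pos (by linarith : (0:ℝ) < s - t)]
      have : s ≤ t + ε / 2 := min_le_left _ _
      linarith
    have h1 := hcl hdist
    have hx₁mem : x₁ ∈ {z | min s M ≤ f z} := by
      simp only [Set.mem_setOf_eq, min_eq_left hsM]
      exact min_le_right _ _
    have hKs_sub : {z | min s M ≤ f z} ⊆ U := by
      intro z hz
      simp only [Set.mem_setOf_eq, min_eq_left hsM] at hz
      exact lt_of_lt_of_le hts hz
    have hgys : Metric.infDist y U ≤ g y s :=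
      Metric.infDist_le_infDist_of_subset hKs_sub ⟨x₁, hx₁mem⟩
    have hyU : δ - δ / 4 ≤ Metric.infDist y U := by
      have := Metric.infDist_le_infDist_add_dist (x := x) (y := y) (s := U)
      have hd : dist x y ≤ δ / 4 := hyx.le
      rw [← hδdef] at this
      linarith
    rw [Real.dist_eq] at h1
    have habs : g y s - g y t ≤ |g y s - g y t| := le_abs_self _
    linarith


end
end

section
/- Let f_i (i ∈ ℕ) and f be quasi-concave functions on ℝ^N such that f_i increases pointwise to f on ℝ^N as i → ∞. Then for all t > 0, except for at most countably many values of t, the sets L_t(f_i) converge to L_t(f) in the Hausdorff sense, i.e. the Hausdorff (extended) distance between L_t(f_i) and L_t(f) tends to 0 as i → ∞. -/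
open Filter Topology MeasureTheory

noncomputable section

/-!
Since `f_i ≤ f`, every `L_t(f_i)` lies in `L_t(f)`, so only the approximation of `L_t(f)` from
inside is at stake. A point `y` with `f y > t` lies in `L_t(f_i)` for all large `i`, and
compactness of `L_t(f)` makes this uniform as soon as `L_t(f)` is contained in the closure of
`{f > t}`. The levels `t` where this fails are countable: such a `t` is determined by any basic
open set that meets `{f = t}` but misses `{f > t}`.
-/

open Set Metric

def irregularLevels {X α : Type*} [TopologicalSpace X] [LinearOrder α] (f : X → α) : Set α :=
  {t | ∃ x, f x = t ∧ x ∉ closure {y | t < f y}}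

theorem countable_irregularLevels {X α : Type*} [TopologicalSpace X]
    [SecondCountableTopology X] [LinearOrder α] (f : X → α) :
    (irregularLevels f).Countable := by
  obtain ⟨B, hBc, -, hB⟩ := TopologicalSpace.exists_countable_basis X
  have hcover : irregularLevels f ⊆
      ⋃ U ∈ B, {t | (∃ x ∈ U, f x = t) ∧ ∀ y ∈ U, f y ≤ t} := by
    rintro t ⟨x, rfl, hx⟩
    simp only [hB.mem_closure_iff, not_forall] at hx
    obtain ⟨U, hUB, hxU, hU⟩ := hx
    exact mem_biUnion hUB ⟨⟨x, hxU, rfl⟩, fun y hy => not_lt.1 fun hlt => hU ⟨y, hy, hlt⟩⟩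
  refine (hBc.biUnion fun U _ => Subsingleton.countable ?_).mono hcover
  rintro s ⟨⟨x, hxU, rfl⟩, hs⟩ t ⟨⟨y, hyU, rfl⟩, ht⟩
  exact le_antisymm (ht x hxU) (hs y hyU)

theorem setOf_le_subset_closure_eventually_le {X ι α : Type*} [TopologicalSpace X]
    [LinearOrder α] [TopologicalSpace α] [OrderClosedTopology α] {l : Filter ι}
    {F : ι → X → α} {f : X → α} (hF : ∀ x, Tendsto (fun i => F i x) l (𝓝 (f x)))
    {t : α} (ht : t ∉ irregularLevels f) :
    {x | t ≤ f x} ⊆ closure {y | ∀ᶠ i in l, t ≤ F i y} := by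
  intro x hx
  have hreg : x ∈ closure {y | t < f y} := by
    rcases hx.eq_or_lt with heq | hlt
    · exact not_not.1 fun hx' => ht ⟨x, heq.symm, hx'⟩
    · exact subset_closure hlt
  refine closure_mono (fun y hy => ?_) hreg
  exact ((hF y).eventually (eventually_gt_nhds hy)).mono fun i => le_of_lt

theorem tendsto_hausdorffEDist_of_subset_closure_eventually_mem {X ι : Type*}
    [PseudoEMetricSpace X] {l : Filter ι} {A : ι → Set X} {K : Set X} (hK : IsCompact K)
    (hAK : ∀ i, A i ⊆ K) (hKA : K ⊆ closure {y | ∀ᶠ i in l, y ∈ A i}) :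
    Tendsto (fun i => hausdorffEDist (A i) K) l (𝓝 0) := by
  refine ENNReal.tendsto_nhds_zero.2 fun ε hε => ?_
  have hcover : K ⊆ ⋃ y ∈ {y | ∀ᶠ i in l, y ∈ A i}, eball y ε := fun x hx => by
    obtain ⟨y, hy, hxy⟩ := EMetric.mem_closure_iff.1 (hKA hx) ε hε
    exact mem_biUnion hy hxy
  obtain ⟨s, hsA, hs, hKs⟩ := hK.elim_finite_subcover_image (fun _ _ => isOpen_eball) hcover
  filter_upwards [(eventually_all_finite hs).2 fun y hy => hsA hy] with i hi
  refine hausdorffEDist_le_of_mem_edist (fun x hx => ⟨x, hAK i hx, by simp⟩) fun x hx => ?_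
  obtain ⟨y, hys, hxy⟩ := mem_iUnion₂.1 (hKs hx)
  exact ⟨y, hi y hys, (mem_eball.1 hxy).le⟩

theorem quasiConcave_increasing_level_sets_converge_general {N : ℕ}
    (fi : ℕ → EuclideanSpace ℝ (Fin N) → ℝ) (f : EuclideanSpace ℝ (Fin N) → ℝ)
    (hf : QuasiConcave f)
    (hmono : Monotone fi)
    (hconv : ∀ x, Tendsto (fun i => fi i x) atTop (𝓝 (f x))) :
    ∃ T : Set ℝ, T.Countable ∧
      ∀ t : ℝ, 0 < t → t ∉ T →
        Tendsto (fun i => EMetric.hausdorffEdist {x | t ≤ fi i x} {x | t ≤ f x})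
          atTop (𝓝 0) := by
  refine ⟨irregularLevels f, countable_irregularLevels f, fun t ht htT => ?_⟩
  have hle : ∀ i x, fi i x ≤ f x := fun i x =>
    Monotone.ge_of_tendsto (f := fun i => fi i x) (fun _ _ hij => hmono hij x) (hconv x) i
  have hK : IsCompact {x | t ≤ f x} :=
    (hf.2 t ht).elim (fun h => h ▸ isCompact_empty) And.left
  exact tendsto_hausdorffEDist_of_subset_closure_eventually_mem hK
    (fun i x hx => le_trans hx (hle i x)) (setOf_le_subset_closure_eventually_le hconv htT)

/-- If a sequence of quasi-concave functions increases pointwise to a quasi-concave `f`,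
then for all `t > 0` outside an at most countable set, the superlevel sets
`L_t(f_i)` converge to `L_t(f)` in the Hausdorff (extended) distance. -/
theorem quasiConcave_increasing_level_sets_converge {N : ℕ}
    (fi : ℕ → EuclideanSpace ℝ (Fin N) → ℝ) (f : EuclideanSpace ℝ (Fin N) → ℝ)
    (hfi : ∀ i, QuasiConcave (fi i)) (hf : QuasiConcave f)
    (hmono : Monotone fi)
    (hconv : ∀ x, Tendsto (fun i => fi i x) atTop (𝓝 (f x))) :
    ∃ T : Set ℝ, T.Countable ∧
      ∀ t : ℝ, 0 < t → t ∉ T →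
        Tendsto (fun i => EMetric.hausdorffEdist {x | t ≤ fi i x} {x | t ≤ f x})
          atTop (𝓝 0) :=
  quasiConcave_increasing_level_sets_converge_general fi f hf hmono hconv

end
end

section
/- Let f_i (i ∈ ℕ) and f be quasi-concave functions on ℝ^N such that f_i decreases pointwise to f on ℝ^N as i → ∞. Then for every t > 0 the sets L_t(f_i) converge to L_t(f) in the Hausdorff sense, i.e. the Hausdorff (extended) distance between L_t(f_i) and L_t(f) tends to 0 as i → ∞. -/
open Filter Topology MeasureTheory

noncomputable section

/-!
The superlevel sets `L_t(f_i)` form a decreasing sequence of compact sets whose intersection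
is `L_t(f)`, because a decreasing sequence converging to `f x` is `≥ t` exactly when its
limit is. A decreasing sequence of compact sets eventually enters every neighbourhood of its
intersection, in particular every `ε`-neighbourhood, and since it also contains the
intersection, its Hausdorff distance to it is eventually at most `ε`. When `L_t(f)` is empty
the same argument shows that `L_t(f_i)` is eventually empty.
-/

open Metric

theorem Antitone.tendsto_hausdorffEDist_iInter {X ι : Type*} [EMetricSpace X] [Preorder ι]
    [IsDirectedOrder ι] [Nonempty ι] {S : ι → Set X} (hS : Antitone S)
    (hcompact : ∀ i, IsCompact (S i)) :
    Tendsto (fun i => hausdorffEDist (S i) (⋂ j, S j)) atTop (𝓝 0) := by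
  refine ENNReal.tendsto_nhds_zero.2 fun ε hε => ?_
  set T := ⋂ j, S j
  have hnhds : ∀ x ∈ T, {y | infEDist y T < ε} ∈ 𝓝 x := fun x hx =>
    (continuous_infEDist.isOpen_preimage _ isOpen_Iio).mem_nhds
      (by simpa [infEDist_zero_of_mem hx] using hε)
  obtain ⟨i, hi⟩ := exists_subset_nhds_of_isCompact hS.directed_ge hcompact hnhds
  refine eventually_atTop.2 ⟨i, fun n hn => hausdorffEDist_le_of_infEDist ?_ ?_⟩
  · exact fun x hx => (hi (hS hn hx)).le
  · intro x hx
    simp [infEDist_zero_of_mem (Set.mem_iInter.1 hx n)]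

theorem setOf_le_eq_iInter_of_antitone_of_tendsto {X ι α : Type*} [TopologicalSpace α]
    [Preorder α] [OrderClosedTopology α] [Preorder ι] [IsDirectedOrder ι] [Nonempty ι]
    {F : ι → X → α} {f : X → α} (hF : Antitone F)
    (hlim : ∀ x, Tendsto (fun i => F i x) atTop (𝓝 (f x))) (t : α) :
    {x | t ≤ f x} = ⋂ i, {x | t ≤ F i x} := by
  ext x
  have hglb := isGLB_of_tendsto_atTop (fun i j hij => hF hij x) (hlim x)
  simp [le_isGLB_iff hglb, mem_lowerBounds]

theorem QuasiConcave.isCompact_setOf_le {N : ℕ} {f : EuclideanSpace ℝ (Fin N) → ℝ}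
    (hf : QuasiConcave f) {t : ℝ} (ht : 0 < t) : IsCompact {x | t ≤ f x} :=
  (hf.2 t ht).elim (fun hempty => hempty ▸ isCompact_empty) And.left

theorem quasiConcave_decreasing_level_sets_converge_general {N : ℕ}
    (fi : ℕ → EuclideanSpace ℝ (Fin N) → ℝ) (f : EuclideanSpace ℝ (Fin N) → ℝ)
    (hfi : ∀ i, QuasiConcave (fi i))
    (hanti : Antitone fi)
    (hconv : ∀ x, Tendsto (fun i => fi i x) atTop (𝓝 (f x))) :
    ∀ t : ℝ, 0 < t →
      Tendsto (fun i => EMetric.hausdorffEdist {x | t ≤ fi i x} {x | t ≤ f x})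
        atTop (𝓝 0) := by
  intro t ht
  rw [setOf_le_eq_iInter_of_antitone_of_tendsto hanti hconv t]
  exact Antitone.tendsto_hausdorffEDist_iInter (fun i j hij x hx => hx.trans (hanti hij x))
    fun i => (hfi i).isCompact_setOf_le ht

/-- If a sequence of quasi-concave functions decreases pointwise to a quasi-concave `f`,
then for every `t > 0` the superlevel sets `L_t(f_i)` converge to `L_t(f)` in the
Hausdorff (extended) distance. -/
theorem quasiConcave_decreasing_level_sets_converge {N : ℕ}
    (fi : ℕ → EuclideanSpace ℝ (Fin N) → ℝ) (f : EuclideanSpace ℝ (Fin N) → ℝ)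
    (hfi : ∀ i, QuasiConcave (fi i)) (hf : QuasiConcave f)
    (hanti : Antitone fi)
    (hconv : ∀ x, Tendsto (fun i => fi i x) atTop (𝓝 (f x))) :
    ∀ t : ℝ, 0 < t →
      Tendsto (fun i => EMetric.hausdorffEdist {x | t ≤ fi i x} {x | t ≤ f x})
        atTop (𝓝 0) :=
  quasiConcave_decreasing_level_sets_converge_general fi f hfi hanti hconv

end
end

section
/- Let φ : [0,∞) → ℝ be continuous with φ(0) = 0. Define μ : C^N → ℝ by μ(f) = φ(M(f)), where M(f) is the maximum of f on ℝ^N (and M(0) = 0). Then μ is an invariant and continuous valuation on C^N. -/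
open Filter Topology MeasureTheory

noncomputable section

/-- `μ` is a valuation on `C^N`: it vanishes on the zero function and satisfies
the inclusion-exclusion property with respect to pointwise max and min. -/
def IsValuation {N : ℕ} (μ : (EuclideanSpace ℝ (Fin N) → ℝ) → ℝ) : Prop :=
  μ (fun _ => 0) = 0 ∧
  ∀ f g : EuclideanSpace ℝ (Fin N) → ℝ,
    QuasiConcave f → QuasiConcave g →
    QuasiConcave (fun x => max (f x) (g x)) →
    μ (fun x => max (f x) (g x)) + μ (fun x => min (f x) (g x)) = μ f + μ g

/-- `μ` is invariant under rigid motions (isometries) of `ℝ^N`. -/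
def IsInvariantVal {N : ℕ} (μ : (EuclideanSpace ℝ (Fin N) → ℝ) → ℝ) : Prop :=
  ∀ (T : EuclideanSpace ℝ (Fin N) ≃ᵢ EuclideanSpace ℝ (Fin N))
    (f : EuclideanSpace ℝ (Fin N) → ℝ), QuasiConcave f →
    μ (fun x => f (T x)) = μ f

/-- `μ` is continuous: it preserves limits of monotone pointwise convergent
sequences of quasi-concave functions. -/
def IsContinuousVal {N : ℕ} (μ : (EuclideanSpace ℝ (Fin N) → ℝ) → ℝ) : Prop :=
  ∀ (fi : ℕ → EuclideanSpace ℝ (Fin N) → ℝ) (f : EuclideanSpace ℝ (Fin N) → ℝ),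
    (∀ i, QuasiConcave (fi i)) → QuasiConcave f →
    (Monotone fi ∨ Antitone fi) →
    (∀ x, Tendsto (fun i => fi i x) atTop (𝓝 (f x))) →
    Tendsto (fun i => μ (fi i)) atTop (𝓝 (μ f))

/-- `μ` is simple: it vanishes on quasi-concave functions which are zero a.e. -/
def IsSimpleVal {N : ℕ} (μ : (EuclideanSpace ℝ (Fin N) → ℝ) → ℝ) : Prop :=
  ∀ f : EuclideanSpace ℝ (Fin N) → ℝ, QuasiConcave f →
    (∀ᵐ x : EuclideanSpace ℝ (Fin N), f x = 0) → μ f = 0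

/-- `μ` is monotone increasing: `f ≤ g` pointwise implies `μ f ≤ μ g`. -/
def IsMonotoneVal {N : ℕ} (μ : (EuclideanSpace ℝ (Fin N) → ℝ) → ℝ) : Prop :=
  ∀ f g : EuclideanSpace ℝ (Fin N) → ℝ, QuasiConcave f → QuasiConcave g →
    (∀ x, f x ≤ g x) → μ f ≤ μ g

lemma qc_level {N : ℕ} {f : EuclideanSpace ℝ (Fin N) → ℝ} (hf : QuasiConcave f)
    {t : ℝ} (ht : 0 < t) (hne : {x | t ≤ f x}.Nonempty) :
    IsCompact {x | t ≤ f x} ∧ Convex ℝ {x | t ≤ f x} := by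
  rcases hf.2 t ht with h | h
  · rw [h] at hne; exact absurd hne (Set.not_nonempty_empty)
  · exact h

lemma qc_bddAbove {N : ℕ} {f : EuclideanSpace ℝ (Fin N) → ℝ} (hf : QuasiConcave f) :
    BddAbove (Set.range f) := by
  by_contra h
  have hne : ∀ n : ℕ, {x | ((n : ℝ) + 1) ≤ f x}.Nonempty := by
    intro n
    obtain ⟨y, ⟨x, rfl⟩, hy⟩ := not_bddAbove_iff.mp h ((n : ℝ) + 1)
    exact ⟨x, hy.le⟩
  set S : ℕ → Set (EuclideanSpace ℝ (Fin N)) := fun n => {x | ((n : ℝ) + 1) ≤ f x} with hS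
  have hcomp : ∀ n, IsCompact (S n) := fun n => (qc_level hf (by positivity) (hne n)).1
  have hanti : ∀ n, S (n + 1) ⊆ S n := by
    intro n x hx
    simp only [hS, Set.mem_setOf_eq] at hx ⊢
    push_cast at hx
    linarith
  obtain ⟨x, hx⟩ := IsCompact.nonempty_iInter_of_sequence_nonempty_isCompact_isClosed S
    hanti hne (hcomp 0) (fun n => (hcomp n).isClosed)
  obtain ⟨n, hn⟩ := exists_nat_gt (f x)
  have : ((n : ℝ) + 1) ≤ f x := Set.mem_iInter.mp hx n
  linarith

lemma qc_sSup_nonneg {N : ℕ} {f : EuclideanSpace ℝ (Fin N) → ℝ} (hf : QuasiConcave f) :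
    0 ≤ sSup (Set.range f) :=
  le_trans (hf.1 0) (le_csSup (qc_bddAbove hf) ⟨0, rfl⟩)

lemma qc_sSup_max {N : ℕ} {f g : EuclideanSpace ℝ (Fin N) → ℝ}
    (hf : QuasiConcave f) (hg : QuasiConcave g) :
    sSup (Set.range fun x => max (f x) (g x)) =
      max (sSup (Set.range f)) (sSup (Set.range g)) := by
  have hbm : BddAbove (Set.range fun x => max (f x) (g x)) := by
    refine ⟨max (sSup (Set.range f)) (sSup (Set.range g)), ?_⟩
    rintro _ ⟨x, rfl⟩
    exact max_le_max (le_csSup (qc_bddAbove hf) ⟨x, rfl⟩) (le_csSup (qc_bddAbove hg) ⟨x, rfl⟩)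
  apply le_antisymm
  · apply csSup_le (Set.range_nonempty _)
    rintro _ ⟨x, rfl⟩
    exact max_le_max (le_csSup (qc_bddAbove hf) ⟨x, rfl⟩) (le_csSup (qc_bddAbove hg) ⟨x, rfl⟩)
  · apply max_le
    · apply csSup_le (Set.range_nonempty _)
      rintro _ ⟨x, rfl⟩
      exact le_trans (le_max_left _ _) (le_csSup hbm ⟨x, rfl⟩)
    · apply csSup_le (Set.range_nonempty _)
      rintro _ ⟨x, rfl⟩
      exact le_trans (le_max_right _ _) (le_csSup hbm ⟨x, rfl⟩)

lemma qc_sSup_min {N : ℕ} {f g : EuclideanSpace ℝ (Fin N) → ℝ}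
    (hf : QuasiConcave f) (hg : QuasiConcave g)
    (hfg : QuasiConcave fun x => max (f x) (g x)) :
    sSup (Set.range fun x => min (f x) (g x)) =
      min (sSup (Set.range f)) (sSup (Set.range g)) := by
  have hbm : BddAbove (Set.range fun x => min (f x) (g x)) := by
    refine ⟨sSup (Set.range f), ?_⟩
    rintro _ ⟨x, rfl⟩
    exact le_trans (min_le_left _ _) (le_csSup (qc_bddAbove hf) ⟨x, rfl⟩)
  apply le_antisymm
  · apply csSup_le (Set.range_nonempty _)
    rintro _ ⟨x, rfl⟩
    exact min_le_min (le_csSup (qc_bddAbove hf) ⟨x, rfl⟩) (le_csSup (qc_bddAbove hg) ⟨x, rfl⟩)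
  · apply le_of_forall_lt
    intro t ht
    rcases lt_or_ge t 0 with ht0 | ht0
    · calc t < 0 := ht0
        _ ≤ min (f 0) (g 0) := le_min (hf.1 0) (hg.1 0)
        _ ≤ _ := le_csSup hbm ⟨0, rfl⟩
    · -- 0 ≤ t < min A B
      obtain ⟨t', ht'1, ht'2⟩ := exists_between ht
      have ht'0 : 0 < t' := ht0.trans_lt ht'1
      obtain ⟨_, ⟨a, rfl⟩, ha⟩ := exists_lt_of_lt_csSup (Set.range_nonempty f)
        (lt_of_lt_of_le ht'2 (min_le_left _ _))
      obtain ⟨_, ⟨b, rfl⟩, hb⟩ := exists_lt_of_lt_csSup (Set.range_nonempty g)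
        (lt_of_lt_of_le ht'2 (min_le_right _ _))
      set Sf := {x | t' ≤ f x}
      set Sg := {x | t' ≤ g x}
      have haf : a ∈ Sf := ha.le
      have hbg : b ∈ Sg := hb.le
      have hSfc := qc_level hf ht'0 ⟨a, haf⟩
      have hSgc := qc_level hg ht'0 ⟨b, hbg⟩
      have hunion : {x | t' ≤ max (f x) (g x)} = Sf ∪ Sg := by
        ext x; simp [Sf, Sg, le_max_iff]
      have hconv : Convex ℝ (Sf ∪ Sg) := by
        have := (qc_level hfg ht'0 ⟨a, by rw [hunion]; exact Or.inl haf⟩).2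
        rwa [hunion] at this
      have hseg : segment ℝ a b ⊆ Sf ∪ Sg :=
        (convex_iff_segment_subset.mp hconv) (Or.inl haf) (Or.inr hbg)
      obtain ⟨x, _, hxf, hxg⟩ := (isPreconnected_closed_iff.mp
        (convex_segment a b).isPreconnected Sf Sg hSfc.1.isClosed hSgc.1.isClosed hseg
        ⟨a, left_mem_segment ℝ a b, haf⟩ ⟨b, right_mem_segment ℝ a b, hbg⟩ :
        (segment ℝ a b ∩ (Sf ∩ Sg)).Nonempty)
      have : t' ≤ min (f x) (g x) := le_min hxf hxg
      calc t < t' := ht'1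
        _ ≤ min (f x) (g x) := this
        _ ≤ _ := le_csSup hbm ⟨x, rfl⟩

/-- If `φ : [0,∞) → ℝ` is continuous with `φ(0) = 0`, then `f ↦ φ(M(f))`, where
`M(f) = max f`, is an invariant and continuous valuation on `C^N`. -/
theorem max_valuation {N : ℕ} (φ : ℝ → ℝ)
    (hφc : ContinuousOn φ (Set.Ici 0)) (hφ0 : φ 0 = 0) :
    IsValuation (N := N) (fun f => φ (sSup (Set.range f))) ∧
    IsInvariantVal (N := N) (fun f => φ (sSup (Set.range f))) ∧
    IsContinuousVal (N := N) (fun f => φ (sSup (Set.range f))) := by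
  refine ⟨⟨?_, ?_⟩, ?_, ?_⟩
  · dsimp only
    rw [Set.range_const, csSup_singleton, hφ0]
  · intro f g hf hg hfg
    dsimp only
    rw [qc_sSup_max hf hg, qc_sSup_min hf hg hfg]
    rcases le_total (sSup (Set.range f)) (sSup (Set.range g)) with h | h
    · rw [max_eq_right h, min_eq_left h]; ring
    · rw [max_eq_left h, min_eq_right h]
  · intro T f hf
    have : Set.range (fun x => f (T x)) = Set.range f := by
      rw [show (fun x => f (T x)) = f ∘ T from rfl, Set.range_comp,
        T.surjective.range_eq, Set.image_univ]
    dsimp only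
    rw [this]
  · intro fi f hfi hqf hmono hlim
    set Mi : ℕ → ℝ := fun i => sSup (Set.range (fi i)) with hMi
    set M : ℝ := sSup (Set.range f) with hM
    have hMnn : 0 ≤ M := qc_sSup_nonneg hqf
    have hMinn : ∀ i, 0 ≤ Mi i := fun i => qc_sSup_nonneg (hfi i)
    have key : Tendsto Mi atTop (𝓝 M) := by
      rcases hmono with hmono | hanti
      · have hle : ∀ i x, fi i x ≤ f x := by
          intro i x
          apply ge_of_tendsto (hlim x)
          filter_upwards [eventually_ge_atTop i] with j hj
          exact hmono hj x
        have hMile : ∀ i, Mi i ≤ M := fun i =>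
          csSup_le (Set.range_nonempty _) (by
            rintro _ ⟨x, rfl⟩
            exact (hle i x).trans (le_csSup (qc_bddAbove hqf) ⟨x, rfl⟩))
        have hMim : Monotone Mi := fun i j hij =>
          csSup_le (Set.range_nonempty _) (by
            rintro _ ⟨x, rfl⟩
            exact (hmono hij x).trans (le_csSup (qc_bddAbove (hfi j)) ⟨x, rfl⟩))
        have hbdd : BddAbove (Set.range Mi) := ⟨M, by rintro _ ⟨i, rfl⟩; exact hMile i⟩
        have htend := tendsto_atTop_ciSup hMim hbdd
        have hsup : (⨆ i, Mi i) = M := by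
          apply le_antisymm (ciSup_le hMile)
          apply csSup_le (Set.range_nonempty f)
          rintro _ ⟨x, rfl⟩
          apply le_of_tendsto (hlim x)
          filter_upwards with i
          exact (le_csSup (qc_bddAbove (hfi i)) ⟨x, rfl⟩).trans (le_ciSup hbdd i)
        rwa [hsup] at htend
      · have hle : ∀ i x, f x ≤ fi i x := by
          intro i x
          apply le_of_tendsto (hlim x)
          filter_upwards [eventually_ge_atTop i] with j hj
          exact hanti hj x
        have hMige : ∀ i, M ≤ Mi i := fun i =>
          csSup_le (Set.range_nonempty _) (by
            rintro _ ⟨x, rfl⟩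
            exact (hle i x).trans (le_csSup (qc_bddAbove (hfi i)) ⟨x, rfl⟩))
        have hMia : Antitone Mi := fun i j hij =>
          csSup_le (Set.range_nonempty _) (by
            rintro _ ⟨x, rfl⟩
            exact (hanti hij x).trans (le_csSup (qc_bddAbove (hfi i)) ⟨x, rfl⟩))
        have hbdd : BddBelow (Set.range Mi) := ⟨M, by rintro _ ⟨i, rfl⟩; exact hMige i⟩
        have htend := tendsto_atTop_ciInf hMia hbdd
        have hinf : (⨅ i, Mi i) = M := by
          apply le_antisymm _ (le_ciInf hMige)
          by_contra hlt
          push_neg at hlt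
          obtain ⟨t, ht1, ht2⟩ := exists_between hlt
          have ht0 : 0 < t := lt_of_le_of_lt hMnn ht1
          set S : ℕ → Set (EuclideanSpace ℝ (Fin N)) := fun i => {x | t ≤ fi i x} with hS
          have hSne : ∀ i, (S i).Nonempty := by
            intro i
            obtain ⟨_, ⟨x, rfl⟩, hx⟩ := exists_lt_of_lt_csSup (Set.range_nonempty (fi i))
              (lt_of_lt_of_le ht2 (ciInf_le hbdd i))
            exact ⟨x, hx.le⟩
          have hScomp : ∀ i, IsCompact (S i) := fun i => (qc_level (hfi i) ht0 (hSne i)).1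
          have hSsub : ∀ i, S (i + 1) ⊆ S i := fun i x hx =>
            le_trans hx (hanti (Nat.le_succ i) x)
          obtain ⟨x, hx⟩ := IsCompact.nonempty_iInter_of_sequence_nonempty_isCompact_isClosed
            S hSsub hSne (hScomp 0) (fun i => (hScomp i).isClosed)
          have h1 : t ≤ f x := ge_of_tendsto (hlim x)
            (.of_forall fun i => Set.mem_iInter.mp hx i)
          have h2 : t ≤ M := h1.trans (le_csSup (qc_bddAbove hqf) ⟨x, rfl⟩)
          linarith
        rwa [hinf] at htend
    have hkey' : Tendsto Mi atTop (𝓝[Set.Ici 0] M) :=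
      tendsto_nhdsWithin_iff.mpr ⟨key, Filter.Eventually.of_forall hMinn⟩
    exact (hφc M hMnn).tendsto.comp hkey'

end
end

section
/- Let N ≥ 1 and let φ : [0,∞) → [0,∞) be continuous with φ(0) = 0. Then ∫_{ℝ^N} φ(f(x)) dx < +∞ for every f ∈ C^N if and only if there exists δ > 0 such that φ ≡ 0 on [0,δ]. -/
open Filter Topology MeasureTheory

noncomputable section

open Metric Set in
open scoped ENNReal in
private lemma aux_easy {N : ℕ} (φ : ℝ → ℝ)
    (hφc : ContinuousOn φ (Set.Ici 0))
    (δ : ℝ) (hδ : 0 < δ) (hvan : ∀ t ∈ Set.Icc (0:ℝ) δ, φ t = 0)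
    (f : EuclideanSpace ℝ (Fin N) → ℝ) (hf : QuasiConcave f) :
    (∫⁻ x, ENNReal.ofReal (φ (f x))) ≠ ⊤ := by
  obtain ⟨hf0, hlv⟩ := hf
  -- f is bounded
  have hbdd : ∃ n : ℕ, ∀ x, f x < n + 1 := by
    by_contra hb
    push_neg at hb
    have hne : ∀ n : ℕ, {x | (n:ℝ) + 1 ≤ f x}.Nonempty := fun n => by
      obtain ⟨x, hx⟩ := hb n; exact ⟨x, hx⟩
    have hcc : ∀ n : ℕ, IsCompact {x | (n:ℝ) + 1 ≤ f x} := fun n => by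
      rcases hlv ((n:ℝ)+1) (by positivity) with h | h
      · exact absurd (hne n) (by rw [h]; exact Set.not_nonempty_empty)
      · exact h.1
    obtain ⟨x, hx⟩ := IsCompact.nonempty_iInter_of_sequence_nonempty_isCompact_isClosed
      (fun n => {x | (n:ℝ) + 1 ≤ f x})
      (fun n => fun x hx => by
        simp only [Set.mem_setOf_eq] at *
        push_cast at hx ⊢
        linarith)
      hne (hcc 0) (fun n => (hcc n).isClosed)
    obtain ⟨n, hn⟩ := exists_nat_gt (f x)
    have := Set.mem_iInter.1 hx n
    simp only [Set.mem_setOf_eq] at this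
    linarith
  obtain ⟨n, hn⟩ := hbdd
  set T : ℝ := max δ (n + 1) with hT
  have hT0 : 0 ≤ T := le_trans hδ.le (le_max_left _ _)
  obtain ⟨c, hcmem, hc⟩ := (isCompact_Icc (a := (0:ℝ)) (b := T)).exists_isMaxOn
    ⟨0, le_refl 0, hT0⟩ (hφc.mono Set.Icc_subset_Ici_self)
  set K : Set (EuclideanSpace ℝ (Fin N)) := {x | δ ≤ f x} with hK
  have hKm : MeasurableSet K ∧ volume K ≠ ⊤ := by
    rcases hlv δ hδ with h | h
    · rw [hK, h]; exact ⟨MeasurableSet.empty, by simp⟩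
    · exact ⟨h.1.isClosed.measurableSet, h.1.measure_lt_top.ne⟩
  have hbound : ∀ x, ENNReal.ofReal (φ (f x)) ≤
      K.indicator (fun _ => ENNReal.ofReal (φ c)) x := by
    intro x
    by_cases hx : x ∈ K
    · rw [Set.indicator_of_mem hx]
      refine ENNReal.ofReal_le_ofReal (hc ?_)
      exact ⟨hf0 x, le_trans (hn x).le (le_max_right _ _)⟩
    · rw [Set.indicator_of_notMem hx]
      have : f x ∈ Set.Icc (0:ℝ) δ := ⟨hf0 x, le_of_not_ge hx⟩
      simp [hvan _ this]
  refine ne_top_of_le_ne_top ?_ (lintegral_mono hbound)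
  rw [lintegral_indicator hKm.1, setLIntegral_const]
  exact ENNReal.mul_ne_top ENNReal.ofReal_ne_top hKm.2

open Metric Set in
open scoped ENNReal in
private lemma aux_hard {N : ℕ} (hN : 1 ≤ N) (φ : ℝ → ℝ)
    (hφnonneg : ∀ t : ℝ, 0 ≤ t → 0 ≤ φ t)
    (hφ0 : φ 0 = 0)
    (h : ∀ δ : ℝ, 0 < δ → ∃ t ∈ Set.Icc (0:ℝ) δ, φ t ≠ 0) :
    ∃ f : EuclideanSpace ℝ (Fin N) → ℝ, QuasiConcave f ∧
      (∫⁻ x, ENNReal.ofReal (φ (f x))) = ⊤ := by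
  classical
  set E := EuclideanSpace ℝ (Fin N)
  -- a picking function
  have pick : ∀ δ : ℝ, ∃ s : ℝ, 0 < δ → (0 < s ∧ s < δ ∧ 0 < φ s) := by
    intro δ
    by_cases hδ : 0 < δ
    · obtain ⟨s, hs, hne⟩ := h (δ/2) (by positivity)
      refine ⟨s, fun _ => ⟨?_, ?_, ?_⟩⟩
      · rcases hs.1.lt_or_eq with h' | h'
        · exact h'
        · exact absurd (h' ▸ hφ0) hne
      · linarith [hs.2]
      · exact (hφnonneg s hs.1).lt_of_ne (Ne.symm hne)
    · exact ⟨0, fun h' => absurd h' hδ⟩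
  choose P hP using pick
  -- the sequence of levels
  set t : ℕ → ℝ := fun n => Nat.rec (P 1) (fun _ s => P (s/2)) n with ht_def
  have ht0 : ∀ n, 0 < t n ∧ 0 < φ (t n) := by
    intro n
    induction n with
    | zero => obtain ⟨a, b, c⟩ := hP 1 one_pos; exact ⟨a, c⟩
    | succ k ih =>
      obtain ⟨a, b, c⟩ := hP (t k / 2) (by linarith [ih.1])
      exact ⟨a, c⟩
  have htdec : ∀ n, t (n + 1) < t n / 2 := by
    intro n
    exact (hP (t n / 2) (by linarith [(ht0 n).1])).2.1
  have htanti : StrictAnti t := strictAnti_nat_of_succ_lt fun n => by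
    linarith [htdec n, (ht0 n).1]
  have htsmall : ∀ n, t n ≤ t 0 * (1/2)^n := by
    intro n
    induction n with
    | zero => simp
    | succ k ih =>
      have := htdec k
      calc t (k+1) ≤ t k / 2 := this.le
        _ ≤ (t 0 * (1/2)^k) / 2 := by linarith
        _ = t 0 * (1/2)^(k+1) := by ring
  -- existence of small levels
  have hexsmall : ∀ s : ℝ, 0 < s → ∃ n, t n < s := by
    intro s hs
    obtain ⟨n, hn⟩ := exists_pow_lt_of_lt_one (div_pos hs (ht0 0).1) (by norm_num : (1/2:ℝ) < 1)
    refine ⟨n, lt_of_le_of_lt (htsmall n) ?_⟩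
    rw [lt_div_iff₀ (ht0 0).1] at hn
    linarith [hn]
  -- volume facts
  have vpos : 0 < volume (ball (0:E) 1) := measure_ball_pos _ _ one_pos
  have vfin : volume (ball (0:E) 1) ≠ ⊤ := (isCompact_closedBall _ _).measure_lt_top.trans_le' (measure_mono ball_subset_closedBall) |>.ne
  -- the radius step
  have step : ∀ (n : ℕ) (R : ℝ), ∃ R', 0 ≤ R → (R + 1 < R' ∧
      1 ≤ ENNReal.ofReal (φ (t n)) * volume (closedBall (0:E) R' \ closedBall 0 R)) := by
    intro n R
    by_cases hR : 0 ≤ R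
    swap
    · exact ⟨0, fun h' => absurd h' hR⟩
    set c := φ (t n) with hc_def
    have hc : 0 < c := (ht0 n).2
    have hcfin : (ENNReal.ofReal c)⁻¹ ≠ ⊤ := ENNReal.inv_ne_top.2 (by simp [hc])
    set D : ℝ≥0∞ := (volume (closedBall (0:E) R) + (ENNReal.ofReal c)⁻¹) / volume (ball (0:E) 1) with hD
    have hDfin : D ≠ ⊤ := by
      refine (ENNReal.div_lt_top ?_ vpos.ne').ne
      exact ENNReal.add_ne_top.2 ⟨(isCompact_closedBall _ _).measure_lt_top.ne, hcfin⟩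
    set R' : ℝ := max (R + 2) (max 1 (D.toReal + 1)) with hR'
    have hR'1 : 1 ≤ R' := le_trans (le_max_left _ _) (le_max_right _ _)
    have hR'0 : 0 ≤ R' := zero_le_one.trans hR'1
    refine ⟨R', fun _ => ⟨by linarith [le_max_left (R+2) (max 1 (D.toReal + 1))], ?_⟩⟩
    have hfr : Module.finrank ℝ E = N := finrank_euclideanSpace_fin
    have hcb : volume (closedBall (0:E) R') = ENNReal.ofReal (R' ^ N) * volume (ball (0:E) 1) := by
      rw [Measure.addHaar_closedBall volume (0:E) hR'0, hfr]
    have hpow : D ≤ ENNReal.ofReal (R' ^ N) := by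
      have h1 : R' ≤ R' ^ N := le_self_pow₀ hR'1 (by omega)
      have h2 : D.toReal + 1 ≤ R' := le_trans (le_max_right _ _) (le_max_right _ _)
      calc D = ENNReal.ofReal D.toReal := (ENNReal.ofReal_toReal hDfin).symm
        _ ≤ ENNReal.ofReal (R' ^ N) := ENNReal.ofReal_le_ofReal (by linarith)
    have hbig : volume (closedBall (0:E) R) + (ENNReal.ofReal c)⁻¹ ≤ volume (closedBall (0:E) R') := by
      rw [hcb]
      calc volume (closedBall (0:E) R) + (ENNReal.ofReal c)⁻¹ = D * volume (ball (0:E) 1) := by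
            rw [hD, ENNReal.div_mul_cancel vpos.ne' vfin]
        _ ≤ ENNReal.ofReal (R' ^ N) * volume (ball (0:E) 1) := mul_le_mul_left hpow _
    have hdiff : (ENNReal.ofReal c)⁻¹ ≤ volume (closedBall (0:E) R' \ closedBall 0 R) := by
      rw [measure_diff (closedBall_subset_closedBall
          (by linarith [le_max_left (R+2) (max 1 (D.toReal + 1))]))
        (measurableSet_closedBall).nullMeasurableSet (isCompact_closedBall _ _).measure_lt_top.ne]
      exact ENNReal.le_sub_of_add_le_left (isCompact_closedBall _ _).measure_lt_top.ne hbig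
    calc (1:ℝ≥0∞) = ENNReal.ofReal c * (ENNReal.ofReal c)⁻¹ :=
          (ENNReal.mul_inv_cancel (by simp [hc]) ENNReal.ofReal_ne_top).symm
      _ ≤ _ := mul_le_mul_right hdiff _
  choose nxt hnxt using fun p : ℕ × ℝ => step p.1 p.2
  set r : ℕ → ℝ := fun n => Nat.rec (0:ℝ) (fun k R => nxt (k+1, R)) n with hr_def
  have hr0 : r 0 = 0 := rfl
  have hrsucc : ∀ n, r (n+1) = nxt (n+1, r n) := fun n => rfl
  have hrpos : ∀ n, 0 ≤ r n ∧ r n + 1 < r (n+1) ∧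
      1 ≤ ENNReal.ofReal (φ (t (n+1))) * volume (closedBall (0:E) (r (n+1)) \ closedBall 0 (r n)) := by
    intro n
    induction n with
    | zero =>
      have := hnxt (1, r 0) (le_refl 0)
      exact ⟨le_refl 0, this.1, this.2⟩
    | succ k ih =>
      have hk1 : 0 ≤ r (k+1) := by linarith [ih.1, ih.2.1]
      have := hnxt (k+2, r (k+1)) hk1
      exact ⟨hk1, this.1, this.2⟩
  have hrmono : StrictMono r := strictMono_nat_of_lt_succ fun n => by linarith [(hrpos n).2.1]
  have hrtop : ∀ x : E, ∃ n, ‖x‖ ≤ r n := by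
    intro x
    obtain ⟨n, hn⟩ := exists_nat_gt (‖x‖)
    refine ⟨n, hn.le.trans ?_⟩
    -- r n ≥ n
    clear hn
    induction n with
    | zero => simp [hr0]
    | succ k ih => push_cast; linarith [(hrpos k).2.1, ih]
  -- the function f
  set f : E → ℝ := fun x => t (Nat.find (hrtop x)) with hf_def
  have hfval : ∀ x : E, f x = t (Nat.find (hrtop x)) := fun _ => rfl
  -- superlevel sets
  have hlevel : ∀ (s : ℝ) (hs : 0 < s), s ≤ t 0 →
      {x : E | s ≤ f x} = closedBall 0 (r (Nat.find (hexsmall s hs) - 1)) := by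
    intro s hs hsle
    set k := Nat.find (hexsmall s hs) with hk
    have hspec : t k < s := Nat.find_spec (hexsmall s hs)
    have hk0 : k ≠ 0 := by
      intro h0
      rw [h0] at hspec
      linarith
    set m := k - 1 with hm
    have hkm : k = m + 1 := (Nat.succ_pred_eq_of_ne_zero hk0).symm
    have hiff : ∀ j : ℕ, s ≤ t j ↔ j ≤ m := by
      intro j
      constructor
      · intro hj
        by_contra hjm
        push_neg at hjm
        have : k ≤ j := by omega
        have := htanti.antitone this
        linarith
      · intro hj
        have : j < k := by omega
        have := Nat.find_min (hexsmall s hs) this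
        linarith [not_lt.1 this]
    ext x
    simp only [Set.mem_setOf_eq, mem_closedBall, dist_zero_right]
    rw [hfval x, hiff, Nat.find_le_iff]
    constructor
    · rintro ⟨j, hjm, hj⟩
      exact hj.trans (hrmono.monotone hjm)
    · intro hx
      exact ⟨m, le_refl m, hx⟩
  refine ⟨f, ⟨?_, ?_⟩, ?_⟩
  · intro x; exact (ht0 _).1.le
  · intro s hs
    by_cases hsle : s ≤ t 0
    · right
      rw [hlevel s hs hsle]
      exact ⟨isCompact_closedBall _ _, convex_closedBall _ _⟩
    · left
      ext x
      simp only [Set.mem_setOf_eq, Set.mem_empty_iff_false, iff_false, not_le]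
      exact lt_of_le_of_lt (htanti.antitone (Nat.zero_le _)) (lt_of_not_ge hsle)
  · -- infinite integral
    set A : ℕ → Set E := fun n => closedBall (0:E) (r (n+1)) \ closedBall 0 (r n) with hA
    have hAm : ∀ n, MeasurableSet (A n) :=
      fun n => measurableSet_closedBall.diff measurableSet_closedBall
    have hdisj : Pairwise (Function.onFun Disjoint A) := by
      have key : ∀ m n : ℕ, m < n → Disjoint (A m) (A n) := by
        intro m n hmn
        rw [Set.disjoint_left]
        rintro x ⟨hx1, -⟩ ⟨-, hx2⟩
        rw [mem_closedBall, dist_zero_right] at hx1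
        refine hx2 ?_
        rw [mem_closedBall, dist_zero_right]
        exact hx1.trans (hrmono.monotone hmn)
      intro m n hmn
      rcases hmn.lt_or_gt with h | h
      · exact key m n h
      · exact (key n m h).symm
    have hfA : ∀ n : ℕ, ∀ x ∈ A n, f x = t (n+1) := by
      rintro n x ⟨hx1, hx2⟩
      rw [mem_closedBall, dist_zero_right] at hx1
      rw [mem_closedBall, dist_zero_right] at hx2
      push_neg at hx2
      rw [hfval x]
      have hfind : Nat.find (hrtop x) = n + 1 := by
        rw [Nat.find_eq_iff]
        refine ⟨hx1, fun j hj => ?_⟩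
        push_neg
        calc r j ≤ r n := hrmono.monotone (by omega)
          _ < ‖x‖ := hx2
      rw [hfind]
    have htop : (⊤ : ℝ≥0∞) ≤ ∫⁻ x, ENNReal.ofReal (φ (f x)) := by
      calc (⊤:ℝ≥0∞) = ∑' _ : ℕ, (1:ℝ≥0∞) :=
            (ENNReal.tsum_const_eq_top_of_ne_zero one_ne_zero).symm
        _ ≤ ∑' n : ℕ, ENNReal.ofReal (φ (t (n+1))) * volume (A n) :=
            ENNReal.tsum_le_tsum fun n => (hrpos n).2.2
        _ ≤ ∑' n : ℕ, ∫⁻ x in A n, ENNReal.ofReal (φ (f x)) := by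
            refine ENNReal.tsum_le_tsum fun n => ?_
            rw [← setLIntegral_const (A n) (ENNReal.ofReal (φ (t (n+1))))]
            refine setLIntegral_mono' (hAm n) fun x hx => ?_
            rw [hfA n x hx]
        _ = ∫⁻ x in ⋃ n, A n, ENNReal.ofReal (φ (f x)) :=
            (lintegral_iUnion hAm hdisj _).symm
        _ ≤ ∫⁻ x, ENNReal.ofReal (φ (f x)) := setLIntegral_le_lintegral _ _
    exact top_le_iff.1 htop

/-- For `N ≥ 1` and a continuous nonnegative `φ : [0,∞) → [0,∞)` with `φ(0) = 0`,
the integral `∫_{ℝ^N} φ(f(x)) dx` is finite for every quasi-concave `f` if and only if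
`φ` vanishes identically in some right neighborhood `[0,δ]` of the origin. -/
theorem integral_finite_iff_vanishes_near_zero {N : ℕ} (hN : 1 ≤ N) (φ : ℝ → ℝ)
    (hφc : ContinuousOn φ (Set.Ici 0))
    (hφnonneg : ∀ t : ℝ, 0 ≤ t → 0 ≤ φ t)
    (hφ0 : φ 0 = 0) :
    (∀ f : EuclideanSpace ℝ (Fin N) → ℝ, QuasiConcave f →
      (∫⁻ x, ENNReal.ofReal (φ (f x))) ≠ ⊤) ↔
    ∃ δ > (0:ℝ), ∀ t ∈ Set.Icc (0:ℝ) δ, φ t = 0 := by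
  constructor
  · intro H
    by_contra hno
    push_neg at hno
    obtain ⟨f, hf, hint⟩ := aux_hard hN φ hφnonneg hφ0 (by
      intro δ hδ
      obtain ⟨t, ht, hne⟩ := hno δ hδ
      exact ⟨t, ht, hne⟩)
    exact H f hf hint
  · rintro ⟨δ, hδ, hvan⟩ f hf
    exact aux_easy φ hφc δ hδ hvan f hf

end
end

section
/- Let ν be a Radon measure on (0,∞) such that ∫_{(0,∞)} vol_N(L_t(f)) dν(t) < +∞ for every f ∈ C^N, and let μ(f) = ∫_{(0,∞)} vol_N(L_t(f)) dν(t). Then μ is continuous (i.e. μ(f_i) → μ(f) for every monotone sequence f_i in C^N converging pointwise to f ∈ C^N) if and only if ν is non-atomic, i.e. ν({t}) = 0 for every t > 0. -/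
open Filter Topology MeasureTheory

noncomputable section

/-!
Write `φ_f(t) = vol {f ≥ t}`, an antitone function of `t`. If `f_i ↑ f` pointwise, then
`⋃ i, {f_i ≥ t}` lies between `{f > t}` and `{f ≥ t}`, so `vol {f_i ≥ t} ↑ φ_f(t)` at every
continuity point of `φ_f`. Its discontinuities are countable, hence `ν`-null when `ν` has no
atoms, and monotone convergence applies. If `f_i ↓ f`, then `{f ≥ t} = ⋂ i, {f_i ≥ t}` with
closed sets of finite measure, and monotone convergence from above applies since `μ(f_0) < ∞`.

Conversely, if `ν {t₀} > 0`, the heights `c_i ↑ t₀` give indicators `c_i 𝟙_B ↑ t₀ 𝟙_B` of the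
unit ball, while `μ(c 𝟙_B) = vol(B) ν((0, c])` and `ν((0, c_i]) → ν((0, t₀)) < ν((0, t₀])`.
-/

open Set
open scoped ENNReal

section Superlevel

variable {α : Type*} [MeasurableSpace α] (m : Measure α)

theorem antitone_measure_superlevel (f : α → ℝ) : Antitone fun t => m {x | t ≤ f x} :=
  fun _ _ hst => measure_mono fun _ hx => hst.trans hx

theorem measure_superlevel_lt_eq_of_continuousAt {f : α → ℝ} {t : ℝ}
    (hcont : ContinuousAt (fun s => m {x | s ≤ f x}) t) :
    m {x | t < f x} = m {x | t ≤ f x} := by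
  obtain ⟨u, hu_anti, hu_gt, hu_lim⟩ := exists_seq_strictAnti_tendsto t
  have hunion : {x | t < f x} = ⋃ n, {x | u n ≤ f x} := by
    ext x
    simp only [mem_ofPred_eq, mem_iUnion]
    refine ⟨fun h => ?_, fun ⟨n, hn⟩ => (hu_gt n).trans_le hn⟩
    obtain ⟨n, hn⟩ := (hu_lim.eventually (eventually_lt_nhds h)).exists
    exact ⟨n, hn.le⟩
  rw [hunion]
  exact tendsto_nhds_unique
    (tendsto_measure_iUnion_atTop fun i j hij x hx => (hu_anti.antitone hij).trans hx)
    (hcont.tendsto.comp hu_lim)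

variable {fi : ℕ → α → ℝ} {f : α → ℝ}

theorem iSup_measure_superlevel_of_monotone (hmono : Monotone fi)
    (hlim : ∀ x, Tendsto (fun i => fi i x) atTop (𝓝 (f x))) {t : ℝ}
    (hcont : ContinuousAt (fun s => m {x | s ≤ f x}) t) :
    ⨆ i, m {x | t ≤ fi i x} = m {x | t ≤ f x} := by
  have hsets : Monotone fun i => {x | t ≤ fi i x} := fun i j hij x hx => hx.trans (hmono hij x)
  rw [← hsets.measure_iUnion]
  refine le_antisymm (measure_mono ?_) ?_
  · exact iUnion_subset fun i x hx =>
      hx.trans (Monotone.ge_of_tendsto (fun i j hij => hmono hij x) (hlim x) i)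
  · rw [← measure_superlevel_lt_eq_of_continuousAt m hcont]
    refine measure_mono fun x hx => mem_iUnion.2 ?_
    obtain ⟨i, hi⟩ := ((hlim x).eventually (eventually_gt_nhds hx)).exists
    exact ⟨i, hi.le⟩

theorem iInf_measure_superlevel_of_antitone (hanti : Antitone fi)
    (hlim : ∀ x, Tendsto (fun i => fi i x) atTop (𝓝 (f x))) {t : ℝ}
    (hmeas : ∀ i, NullMeasurableSet {x | t ≤ fi i x} m) (hfin : m {x | t ≤ fi 0 x} ≠ ∞) :
    ⨅ i, m {x | t ≤ fi i x} = m {x | t ≤ f x} := by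
  have hinter : {x | t ≤ f x} = ⋂ i, {x | t ≤ fi i x} := by
    ext x
    simp only [mem_ofPred_eq, mem_iInter]
    exact ⟨fun h i => h.trans (Antitone.le_of_tendsto (fun i j hij => hanti hij x) (hlim x) i),
      ge_of_tendsto' (hlim x)⟩
  rw [hinter, Antitone.measure_iInter (fun i j hij x hx => hx.trans (hanti hij x)) hmeas ⟨0, hfin⟩]

theorem tendsto_lintegral_superlevel_of_monotone (ν : Measure ℝ) [NullSingletonClass ν]
    (hmono : Monotone fi) (hlim : ∀ x, Tendsto (fun i => fi i x) atTop (𝓝 (f x))) :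
    Tendsto (fun i => ∫⁻ t, m {x | t ≤ fi i x} ∂ν) atTop (𝓝 (∫⁻ t, m {x | t ≤ f x} ∂ν)) := by
  have hcont : ∀ᵐ t ∂ν, ContinuousAt (fun s => m {x | s ≤ f x}) t :=
    ae_iff.2 ((antitone_measure_superlevel m f).countable_not_continuousAt.measure_zero ν)
  have hlevel_mono : Monotone fun i t => m {x | t ≤ fi i x} :=
    fun i j hij t => measure_mono fun x hx => hx.trans (hmono hij x)
  have hlint : ∫⁻ t, m {x | t ≤ f x} ∂ν = ⨆ i, ∫⁻ t, m {x | t ≤ fi i x} ∂ν := by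
    rw [← lintegral_iSup (fun i => (antitone_measure_superlevel m (fi i)).measurable) hlevel_mono]
    exact lintegral_congr_ae
      (hcont.mono fun t ht => (iSup_measure_superlevel_of_monotone m hmono hlim ht).symm)
  rw [hlint]
  exact tendsto_atTop_iSup fun i j hij => lintegral_mono (hlevel_mono hij)

theorem tendsto_lintegral_superlevel_of_antitone (ν : Measure ℝ) (hanti : Antitone fi)
    (hlim : ∀ x, Tendsto (fun i => fi i x) atTop (𝓝 (f x)))
    (hmeas : ∀ᵐ t ∂ν, ∀ i, NullMeasurableSet {x | t ≤ fi i x} m)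
    (hfin : ∫⁻ t, m {x | t ≤ fi 0 x} ∂ν ≠ ∞) :
    Tendsto (fun i => ∫⁻ t, m {x | t ≤ fi i x} ∂ν) atTop (𝓝 (∫⁻ t, m {x | t ≤ f x} ∂ν)) := by
  have hlevel_anti : Antitone fun i t => m {x | t ≤ fi i x} :=
    fun i j hij t => measure_mono fun x hx => hx.trans (hanti hij x)
  have hlint : ∫⁻ t, m {x | t ≤ f x} ∂ν = ⨅ i, ∫⁻ t, m {x | t ≤ fi i x} ∂ν := by
    rw [← lintegral_iInf (fun i => (antitone_measure_superlevel m (fi i)).measurable)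
      hlevel_anti hfin]
    refine lintegral_congr_ae ?_
    filter_upwards [hmeas, ae_lt_top (antitone_measure_superlevel m (fi 0)).measurable hfin]
      with t ht_meas ht_fin
    exact (iInf_measure_superlevel_of_antitone m hanti hlim ht_meas ht_fin.ne).symm
  rw [hlint]
  exact tendsto_atTop_iInf fun i j hij => lintegral_mono (hlevel_anti hij)

end Superlevel

theorem superlevel_indicator_const {α : Type*} (K : Set α) (c : ℝ) {t : ℝ} (ht : 0 < t) :
    {x | t ≤ K.indicator (fun _ => c) x} = if t ≤ c then K else ∅ := by
  ext x
  by_cases hx : x ∈ K <;> split_ifs with htc <;> simp [hx, htc, ht.not_ge]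

theorem setLIntegral_measure_superlevel_indicator_const {α : Type*} [MeasurableSpace α]
    (m : Measure α) (ν : Measure ℝ) (K : Set α) (c : ℝ) :
    ∫⁻ t in Ioi 0, m {x | t ≤ K.indicator (fun _ => c) x} ∂ν = m K * ν (Ioc 0 c) := by
  have hlevel : ∀ t ∈ Ioi (0 : ℝ),
      m {x | t ≤ K.indicator (fun _ => c) x} = (Iic c).indicator (fun _ => m K) t := by
    intro t ht
    rw [superlevel_indicator_const K c ht]
    by_cases htc : t ≤ c <;> simp [htc]
  rw [setLIntegral_congr_fun measurableSet_Ioi hlevel, lintegral_indicator measurableSet_Iic,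
    setLIntegral_const, Measure.restrict_apply measurableSet_Iic, inter_comm, Ioi_inter_Iic]

theorem tendsto_measure_Ioc_of_tendsto_left (ν : Measure ℝ) {a t : ℝ} {u : ℕ → ℝ}
    (hu_mono : Monotone u) (hu_lt : ∀ i, u i < t) (hu_lim : Tendsto u atTop (𝓝 t)) :
    Tendsto (fun i => ν (Ioc a (u i))) atTop (𝓝 (ν (Ioo a t))) := by
  have hunion : ⋃ i, Ioc a (u i) = Ioo a t := by
    ext s
    simp only [mem_iUnion, mem_Ioc, mem_Ioo]
    refine ⟨fun ⟨i, has, hsu⟩ => ⟨has, hsu.trans_lt (hu_lt i)⟩, fun ⟨has, hst⟩ => ?_⟩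
    obtain ⟨i, hi⟩ := (hu_lim.eventually (eventually_gt_nhds hst)).exists
    exact ⟨i, has, hi.le⟩
  rw [← hunion]
  exact tendsto_measure_iUnion_atTop fun i j hij => Ioc_subset_Ioc_right (hu_mono hij)

theorem measure_singleton_eq_zero_of_measure_Ioo_eq_measure_Ioc {ν : Measure ℝ} {a t : ℝ}
    (hat : a < t) (hfin : ν (Ioo a t) ≠ ∞) (h : ν (Ioo a t) = ν (Ioc a t)) : ν {t} = 0 := by
  rw [← Ioo_union_right hat, measure_union (by simp) (measurableSet_singleton t)] at h
  exact (ENNReal.add_right_inj hfin).1 (by rw [add_zero, ← h])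

theorem nullSingletonClass_restrict {α : Type*} [MeasurableSpace α] [MeasurableSingletonClass α]
    {ν : Measure α} {s : Set α} (h : ∀ t ∈ s, ν {t} = 0) : NullSingletonClass (ν.restrict s) := by
  refine ⟨fun t => ?_⟩
  rw [Measure.restrict_apply (measurableSet_singleton t)]
  by_cases ht : t ∈ s
  · exact measure_mono_null inter_subset_left (h t ht)
  · rw [singleton_inter_eq_empty.2 ht, measure_empty]

section QuasiConcave

variable {N : ℕ}

theorem QuasiConcave.measurableSet_superlevel {f : EuclideanSpace ℝ (Fin N) → ℝ}
    (hf : QuasiConcave f) {t : ℝ} (ht : 0 < t) : MeasurableSet {x | t ≤ f x} := by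
  rcases hf.2 t ht with h | h
  · rw [h]
    exact MeasurableSet.empty
  · exact h.1.isClosed.measurableSet

theorem quasiConcave_indicator_const {K : Set (EuclideanSpace ℝ (Fin N))} (hK : IsCompact K)
    (hK_convex : Convex ℝ K) {c : ℝ} (hc : 0 ≤ c) : QuasiConcave (K.indicator fun _ => c) := by
  refine ⟨indicator_nonneg fun _ _ => hc, fun t ht => ?_⟩
  rw [superlevel_indicator_const K c ht]
  split_ifs
  · exact Or.inr ⟨hK, hK_convex⟩
  · exact Or.inl rfl

theorem isContinuousVal_lintegral_superlevel {ν : Measure ℝ}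
    (hfin : ∀ f : EuclideanSpace ℝ (Fin N) → ℝ, QuasiConcave f →
      (∫⁻ t in Ioi (0:ℝ), volume {x | t ≤ f x} ∂ν) ≠ ∞)
    (hna : ∀ t : ℝ, 0 < t → ν {t} = 0) :
    IsContinuousVal (N := N) (fun f => (∫⁻ t in Ioi (0:ℝ), volume {x | t ≤ f x} ∂ν).toReal) := by
  intro fi f hqi hq hmono hlim
  refine (ENNReal.tendsto_toReal (hfin f hq)).comp ?_
  rcases hmono with hmono | hanti
  · have : NullSingletonClass (ν.restrict (Ioi 0)) := nullSingletonClass_restrict hna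
    exact tendsto_lintegral_superlevel_of_monotone volume _ hmono hlim
  · refine tendsto_lintegral_superlevel_of_antitone volume _ hanti hlim ?_ (hfin _ (hqi 0))
    filter_upwards [ae_restrict_mem measurableSet_Ioi] with t ht i
    exact ((hqi i).measurableSet_superlevel ht).nullMeasurableSet

theorem measure_singleton_eq_zero_of_isContinuousVal {ν : Measure ℝ}
    (hfin : ∀ f : EuclideanSpace ℝ (Fin N) → ℝ, QuasiConcave f →
      (∫⁻ t in Ioi (0:ℝ), volume {x | t ≤ f x} ∂ν) ≠ ∞)
    (hcont : IsContinuousVal (N := N)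
      (fun f => (∫⁻ t in Ioi (0:ℝ), volume {x | t ≤ f x} ∂ν).toReal))
    {t₀ : ℝ} (ht₀ : 0 < t₀) : ν {t₀} = 0 := by
  set K : Set (EuclideanSpace ℝ (Fin N)) := Metric.closedBall 0 1
  have hK_pos : volume K ≠ 0 := (Metric.measure_closedBall_pos volume 0 one_pos).ne'
  have hK_fin : volume K ≠ ∞ := (isCompact_closedBall 0 1).measure_lt_top.ne
  have hq : ∀ c, 0 ≤ c → QuasiConcave (K.indicator fun _ => c) :=
    fun _ => quasiConcave_indicator_const (isCompact_closedBall 0 1) (convex_closedBall 0 1)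
  have hμ := setLIntegral_measure_superlevel_indicator_const volume ν K
  have hIoc_fin : ν (Ioc 0 t₀) ≠ ∞ := fun h =>
    hfin _ (hq t₀ ht₀.le) (by rw [hμ, h, ENNReal.mul_top hK_pos])
  obtain ⟨u, hu_mono, hu_mem, hu_lim⟩ := exists_seq_strictMono_tendsto' ht₀
  have hIoc_le : ∀ i, ν (Ioc 0 (u i)) ≤ ν (Ioc 0 t₀) :=
    fun i => measure_mono (Ioc_subset_Ioc_right (hu_mem i).2.le)
  have hto_Ioc : Tendsto (fun i => volume K * ν (Ioc 0 (u i))) atTop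
      (𝓝 (volume K * ν (Ioc 0 t₀))) := by
    have hlim : ∀ x, Tendsto (fun i => K.indicator (fun _ => u i) x) atTop
        (𝓝 (K.indicator (fun _ => t₀) x)) := by
      intro x
      by_cases hx : x ∈ K <;> simp [hx, hu_lim]
    have := hcont _ _ (fun i => hq _ (hu_mem i).1.le) (hq t₀ ht₀.le)
      (Or.inl fun i j hij x => indicator_le_indicator (hu_mono.monotone hij)) hlim
    simp only [hμ] at this
    exact (ENNReal.tendsto_toReal_iff
      (fun i => ENNReal.mul_ne_top hK_fin (ne_top_of_le_ne_top hIoc_fin (hIoc_le i)))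
      (ENNReal.mul_ne_top hK_fin hIoc_fin)).1 this
  have hto_Ioo : Tendsto (fun i => volume K * ν (Ioc 0 (u i))) atTop
      (𝓝 (volume K * ν (Ioo 0 t₀))) :=
    ENNReal.Tendsto.const_mul (tendsto_measure_Ioc_of_tendsto_left ν hu_mono.monotone
      (fun i => (hu_mem i).2) hu_lim) (Or.inr hK_fin)
  exact measure_singleton_eq_zero_of_measure_Ioo_eq_measure_Ioc ht₀
    (ne_top_of_le_ne_top hIoc_fin (measure_mono Ioo_subset_Ioc_self))
    ((ENNReal.mul_right_inj hK_pos hK_fin).1 (tendsto_nhds_unique hto_Ioo hto_Ioc))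

end QuasiConcave

theorem integral_valuation_continuous_iff_nonatomic_general {N : ℕ} (ν : Measure ℝ)
    (hfin : ∀ f : EuclideanSpace ℝ (Fin N) → ℝ, QuasiConcave f →
      (∫⁻ t in Set.Ioi (0:ℝ), volume {x | t ≤ f x} ∂ν) ≠ ⊤) :
    IsContinuousVal (N := N)
      (fun f => (∫⁻ t in Set.Ioi (0:ℝ), volume {x | t ≤ f x} ∂ν).toReal) ↔
    ∀ t : ℝ, 0 < t → ν {t} = 0 :=
  ⟨fun hcont _ ht => measure_singleton_eq_zero_of_isContinuousVal hfin hcont ht,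
    isContinuousVal_lintegral_superlevel hfin⟩

/-- Let `ν` be a Radon measure on `(0,∞)` with `∫_{(0,∞)} vol_N(L_t(f)) dν(t)` finite for
every quasi-concave `f`, and let `μ(f) = ∫_{(0,∞)} vol_N(L_t(f)) dν(t)`. Then `μ` is
continuous if and only if `ν` is non-atomic. -/
theorem integral_valuation_continuous_iff_nonatomic {N : ℕ} (ν : Measure ℝ)
    (hsupp : ν (Set.Iic 0) = 0)
    (hRadon : ∀ K : Set ℝ, IsCompact K → K ⊆ Set.Ioi 0 → ν K ≠ ⊤)
    (hfin : ∀ f : EuclideanSpace ℝ (Fin N) → ℝ, QuasiConcave f →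
      (∫⁻ t in Set.Ioi (0:ℝ), volume {x | t ≤ f x} ∂ν) ≠ ⊤) :
    IsContinuousVal (N := N)
      (fun f => (∫⁻ t in Set.Ioi (0:ℝ), volume {x | t ≤ f x} ∂ν).toReal) ↔
    ∀ t : ℝ, 0 < t → ν {t} = 0 :=
  integral_valuation_continuous_iff_nonatomic_general ν hfin

end
end

section
/- Let N ≥ 1 and let ν be a non-atomic Radon measure on [0,∞). Then ∫_{(0,∞)} vol_N(L_t(f)) dν(t) < +∞ for every f ∈ C^N if and only if there exists δ > 0 such that ν([0,δ]) = 0. -/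
open Filter Topology MeasureTheory
open scoped ENNReal

noncomputable section

/-- In `ℝ^N` with `N ≥ 1`, closed balls have arbitrarily large volume. -/
lemma aux_exists_ball {N : ℕ} (hN : 1 ≤ N) (C : ℝ≥0∞) (hC : C ≠ ⊤) :
    ∃ r : ℝ, 0 ≤ r ∧ C ≤ volume (Metric.closedBall (0 : EuclideanSpace ℝ (Fin N)) r) := by
  haveI : Nonempty (Fin N) := ⟨⟨0, hN⟩⟩
  set c : ℝ := Real.sqrt Real.pi ^ N / Real.Gamma (N / 2 + 1) with hc_def
  have hc : 0 < c := by
    apply div_pos (pow_pos (Real.sqrt_pos.2 Real.pi_pos) N)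
    apply Real.Gamma_pos_of_pos
    positivity
  set c' : ℝ≥0∞ := ENNReal.ofReal c with hc'_def
  have hc'0 : c' ≠ 0 := (ENNReal.ofReal_pos.2 hc).ne'
  have hc't : c' ≠ ⊤ := ENNReal.ofReal_ne_top
  set R : ℝ := max 1 ((C / c').toReal + 1) with hR_def
  have hfin : C / c' ≠ ⊤ := (ENNReal.div_lt_top hC hc'0).ne
  have h1 : C / c' ≤ ENNReal.ofReal R := by
    calc C / c' = ENNReal.ofReal ((C / c').toReal) := (ENNReal.ofReal_toReal hfin).symm
      _ ≤ ENNReal.ofReal R := by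
          apply ENNReal.ofReal_le_ofReal
          exact le_trans (by linarith) (le_max_right _ _)
  have h2 : 1 ≤ ENNReal.ofReal R := ENNReal.one_le_ofReal.2 (le_max_left _ _)
  refine ⟨R, le_trans zero_le_one (le_max_left _ _), ?_⟩
  rw [EuclideanSpace.volume_closedBall (Fin N) 0 R, Fintype.card_fin]
  calc C = (C / c') * c' := (ENNReal.div_mul_cancel hc'0 hc't).symm
    _ ≤ ENNReal.ofReal R * c' := mul_le_mul_left h1 _
    _ ≤ ENNReal.ofReal R ^ N * c' := mul_le_mul_left (le_self_pow₀ h2 (by omega)) _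

/-- Iterated choice of a halving sequence. -/
lemma aux_exists_seq (ν : Measure ℝ)
    (key : ∀ a : ℝ, 0 < a → ∃ b : ℝ, 0 < b ∧ b ≤ a / 2 ∧
      ν (Set.Ioc 0 b) ≤ ν (Set.Ioc 0 a) / 2) :
    ∃ t : ℕ → ℝ, t 0 = 1 ∧ (∀ k, 0 < t k) ∧ (∀ k, t (k + 1) ≤ t k / 2) ∧
      (∀ k, ν (Set.Ioc 0 (t (k + 1))) ≤ ν (Set.Ioc 0 (t k)) / 2) := by
  choose b hb1 hb2 hb3 using key
  let g : {a : ℝ // 0 < a} → {a : ℝ // 0 < a} := fun a => ⟨b a.1 a.2, hb1 a.1 a.2⟩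
  refine ⟨fun k => (g^[k] ⟨1, one_pos⟩).1, by simp, fun k => (g^[k] ⟨1, one_pos⟩).2, ?_, ?_⟩
  · intro k
    show (g^[k+1] ⟨1, one_pos⟩).1 ≤ (g^[k] ⟨1, one_pos⟩).1 / 2
    rw [Function.iterate_succ_apply']
    exact hb2 _ _
  · intro k
    show ν (Set.Ioc 0 (g^[k+1] ⟨1, one_pos⟩).1) ≤ ν (Set.Ioc 0 (g^[k] ⟨1, one_pos⟩).1) / 2
    rw [Function.iterate_succ_apply']
    exact hb3 _ _


/-- For `N ≥ 1` and a non-atomic Radon measure `ν` on `[0,∞)`, the integral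
`∫_{(0,∞)} vol_N(L_t(f)) dν(t)` is finite for every quasi-concave `f` if and only if
`ν([0,δ]) = 0` for some `δ > 0`. -/
theorem lintegral_level_volumes_finite_iff {N : ℕ} (hN : 1 ≤ N) (ν : Measure ℝ)
    (hsupp : ν (Set.Iio 0) = 0)
    (hRadon : ∀ K : Set ℝ, IsCompact K → ν K ≠ ⊤)
    (hna : ∀ t : ℝ, ν {t} = 0) :
    (∀ f : EuclideanSpace ℝ (Fin N) → ℝ, QuasiConcave f →
      (∫⁻ t in Set.Ioi (0:ℝ), volume {x | t ≤ f x} ∂ν) ≠ ⊤) ↔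
    ∃ δ > (0:ℝ), ν (Set.Icc 0 δ) = 0 := by
  constructor
  · intro hfin'
    have hfin : ∀ f : EuclideanSpace ℝ (Fin N) → ℝ,
        ((∀ x, 0 ≤ f x) ∧ ∀ t : ℝ, 0 < t →
          {x | t ≤ f x} = ∅ ∨ (IsCompact {x | t ≤ f x} ∧ Convex ℝ {x | t ≤ f x})) →
        (∫⁻ t in Set.Ioi (0:ℝ), volume {x | t ≤ f x} ∂ν) ≠ ⊤ := fun f hf => hfin' f hf
    by_contra hno
    push_neg at hno
    -- hno : ∀ δ > 0, ν (Set.Icc 0 δ) ≠ 0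
    have hfinIoc : ∀ s : ℝ, ν (Set.Ioc 0 s) ≠ ⊤ := fun s =>
      ne_top_of_le_ne_top (hRadon _ isCompact_Icc) (measure_mono Set.Ioc_subset_Icc_self)
    have hposIoc : ∀ s : ℝ, 0 < s → ν (Set.Ioc 0 s) ≠ 0 := by
      intro s hs h0
      refine hno s hs (measure_mono_null ?_ (measure_union_null (hna 0) h0))
      intro x hx
      rcases eq_or_lt_of_le hx.1 with h | h
      · exact Or.inl h.symm
      · exact Or.inr ⟨h, hx.2⟩
    -- key halving step
    have key : ∀ a : ℝ, 0 < a → ∃ b : ℝ, 0 < b ∧ b ≤ a / 2 ∧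
        ν (Set.Ioc 0 b) ≤ ν (Set.Ioc 0 a) / 2 := by
      intro a ha
      have hanti : Antitone (fun n : ℕ => Set.Ioc (0:ℝ) (1 / (n + 1 : ℝ))) := by
        intro m n hmn
        apply Set.Ioc_subset_Ioc_right
        apply one_div_le_one_div_of_le (by positivity)
        have : (m : ℝ) ≤ n := Nat.cast_le.2 hmn
        linarith
      have htend : Tendsto (fun n : ℕ => ν (Set.Ioc 0 (1 / (n + 1 : ℝ)))) atTop (𝓝 0) := by
        have h1 := tendsto_measure_iInter_atTop (μ := ν)
          (fun n : ℕ => measurableSet_Ioc.nullMeasurableSet) hanti ⟨0, hfinIoc _⟩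
        have hiInter : (⋂ n : ℕ, Set.Ioc (0:ℝ) (1 / (n + 1 : ℝ))) = ∅ := by
          rw [Set.eq_empty_iff_forall_notMem]
          intro x hx
          simp only [Set.mem_iInter, Set.mem_Ioc] at hx
          obtain ⟨n, hn⟩ := exists_nat_one_div_lt (hx 0).1
          exact absurd (hx n).2 (not_le.2 hn)
        rw [hiInter, measure_empty] at h1
        exact h1
      have hhalf : (0:ℝ≥0∞) < ν (Set.Ioc 0 a) / 2 :=
        ENNReal.div_pos (hposIoc a ha) (by norm_num)
      have hev1 : ∀ᶠ n : ℕ in atTop, ν (Set.Ioc 0 (1 / (n + 1 : ℝ))) < ν (Set.Ioc 0 a) / 2 :=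
        htend.eventually_lt_const hhalf
      have hev2 : ∀ᶠ n : ℕ in atTop, 1 / (n + 1 : ℝ) < a / 2 :=
        (tendsto_one_div_add_atTop_nhds_zero_nat).eventually_lt_const (by linarith)
      obtain ⟨n, h1, h2⟩ := (hev1.and hev2).exists
      exact ⟨1 / (n + 1 : ℝ), by positivity, h2.le, h1.le⟩
    obtain ⟨t, ht0, tpos, thalf, tmhalf⟩ := aux_exists_seq ν key
    have htanti : StrictAnti t :=
      strictAnti_nat_of_succ_lt fun k => lt_of_le_of_lt (thalf k) (half_lt_self (tpos k))
    have htbound : ∀ k, t k ≤ (1 / 2 : ℝ) ^ k := by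
      intro k
      induction k with
      | zero => simp [ht0]
      | succ k ih =>
        calc t (k + 1) ≤ t k / 2 := thalf k
          _ ≤ (1 / 2 : ℝ) ^ k / 2 := by linarith
          _ = (1 / 2 : ℝ) ^ (k + 1) := by ring
    have htsmall : ∀ s : ℝ, 0 < s → ∃ k, t (k + 1) < s := by
      intro s hs
      obtain ⟨n, hn⟩ := exists_pow_lt_of_lt_one hs (by norm_num : (1/2:ℝ) < 1)
      refine ⟨n, lt_of_le_of_lt (htbound (n + 1)) (lt_of_le_of_lt ?_ hn)⟩
      apply pow_le_pow_of_le_one (by norm_num) (by norm_num)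
      omega
    set m : ℕ → ℝ≥0∞ := fun k => ν (Set.Ioc 0 (t k)) with hm_def
    have hm0 : ∀ k, m k ≠ 0 := fun k => hposIoc _ (tpos k)
    have hmt : ∀ k, m k ≠ ⊤ := fun k => hfinIoc _
    -- radii
    choose r0 hr00 hr0 using fun k => aux_exists_ball hN (m k)⁻¹ (ENNReal.inv_ne_top.2 (hm0 k))
    set r : ℕ → ℝ := fun k => (∑ j ∈ Finset.range (k + 1), r0 j) + k with hr_def
    have hrmono : Monotone r := by
      intro k l hkl
      apply add_le_add
      · exact Finset.sum_le_sum_of_subset_of_nonneg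
          (Finset.range_subset_range.2 (by omega)) (fun j _ _ => hr00 j)
      · exact_mod_cast hkl
    have hrk : ∀ k, r0 k ≤ r k := by
      intro k
      show r0 k ≤ (∑ j ∈ Finset.range (k + 1), r0 j) + (k : ℝ)
      have h1 : r0 k ≤ ∑ j ∈ Finset.range (k + 1), r0 j :=
        Finset.single_le_sum (fun j _ => hr00 j) (Finset.self_mem_range_succ k)
      have h2 : (0:ℝ) ≤ k := Nat.cast_nonneg k
      linarith
    have hrge : ∀ k : ℕ, (k : ℝ) ≤ r k := by
      intro k
      show (k : ℝ) ≤ (∑ j ∈ Finset.range (k + 1), r0 j) + (k : ℝ)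
      have h1 : (0:ℝ) ≤ ∑ j ∈ Finset.range (k + 1), r0 j :=
        Finset.sum_nonneg fun j _ => hr00 j
      linarith
    have hex : ∀ x : EuclideanSpace ℝ (Fin N), ∃ k : ℕ, ‖x‖ ≤ r k := by
      intro x
      obtain ⟨n, hn⟩ := exists_nat_ge ‖x‖
      exact ⟨n, hn.trans (hrge n)⟩
    set f : EuclideanSpace ℝ (Fin N) → ℝ := fun x => t (Nat.find (hex x)) with hf_def
    -- level sets are balls
    have hlevel : ∀ (k : ℕ) (s : ℝ), t (k + 1) < s → s ≤ t k →
        {x | s ≤ f x} = Metric.closedBall (0 : EuclideanSpace ℝ (Fin N)) (r k) := by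
      intro k s hs1 hs2
      ext x
      simp only [Set.mem_setOf_eq, Metric.mem_closedBall, dist_zero_right, hf_def]
      constructor
      · intro h
        have hk : Nat.find (hex x) ≤ k := by
          by_contra hk
          push_neg at hk
          have := htanti.antitone hk
          linarith
        exact le_trans (Nat.find_spec (hex x)) (hrmono hk)
      · intro h
        have hk : Nat.find (hex x) ≤ k := Nat.find_min' (hex x) h
        exact le_trans hs2 (htanti.antitone hk)
    -- f is quasi-concave
    have hQC : (∀ x, 0 ≤ f x) ∧ ∀ s : ℝ, 0 < s →
        {x | s ≤ f x} = ∅ ∨ (IsCompact {x | s ≤ f x} ∧ Convex ℝ {x | s ≤ f x}) := by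
      refine ⟨fun x => (tpos _).le, fun s hs => ?_⟩
      by_cases hs0 : t 0 < s
      · left
        rw [Set.eq_empty_iff_forall_notMem]
        intro x hx
        have h1 : f x ≤ t 0 := htanti.antitone (Nat.zero_le _)
        have h2 : s ≤ f x := hx
        linarith
      · right
        push_neg at hs0
        have hq : ∃ k, t (k + 1) < s := htsmall s hs
        have h1 : t (Nat.find hq + 1) < s := Nat.find_spec hq
        have h2 : s ≤ t (Nat.find hq) := by
          rcases Nat.eq_zero_or_pos (Nat.find hq) with h | h
          · rw [h]; exact hs0
          · have hlt : Nat.find hq - 1 < Nat.find hq := by omega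
            have h3 : s ≤ t (Nat.find hq - 1 + 1) := not_lt.1 (Nat.find_min hq hlt)
            have h4 : Nat.find hq - 1 + 1 = Nat.find hq := by omega
            rwa [h4] at h3
        rw [hlevel _ s h1 h2]
        exact ⟨isCompact_closedBall _ _, convex_closedBall _ _⟩
    -- the integral is infinite
    apply hfin f hQC
    have hdIoc : ∀ i j : ℕ, i < j →
        Disjoint (Set.Ioc (t (i + 1)) (t i)) (Set.Ioc (t (j + 1)) (t j)) := by
      intro i j hij
      apply Set.disjoint_left.2
      intro x hxi hxj
      have : t j ≤ t (i + 1) := htanti.antitone hij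
      have := hxi.1
      have := hxj.2
      linarith
    have hdisj : Pairwise (Function.onFun Disjoint fun k => Set.Ioc (t (k + 1)) (t k)) := by
      intro i j hij
      rcases lt_or_gt_of_ne hij with h | h
      · exact hdIoc i j h
      · exact (hdIoc j i h).symm
    have hterm : ∀ k : ℕ, (2 : ℝ≥0∞)⁻¹ ≤
        ∫⁻ s in Set.Ioc (t (k + 1)) (t k), volume {x | s ≤ f x} ∂ν := by
      intro k
      have hνIoc : ν (Set.Ioc (t (k + 1)) (t k)) = m k - m (k + 1) := by
        have hunion : Set.Ioc (0:ℝ) (t (k + 1)) ∪ Set.Ioc (t (k + 1)) (t k) =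
            Set.Ioc 0 (t k) :=
          Set.Ioc_union_Ioc_eq_Ioc (tpos (k + 1)).le (htanti (Nat.lt_succ_self k)).le
        have hdisj2 : Disjoint (Set.Ioc (0:ℝ) (t (k + 1))) (Set.Ioc (t (k + 1)) (t k)) :=
          Set.disjoint_left.2 fun x hx1 hx2 => absurd hx1.2 (not_le.2 hx2.1)
        have := measure_union hdisj2 measurableSet_Ioc (μ := ν)
        rw [hunion] at this
        rw [hm_def]
        simp only
        rw [this, ENNReal.add_sub_cancel_left (hmt (k + 1))]
      have hlow : (2 : ℝ≥0∞)⁻¹ ≤ (m k)⁻¹ * ν (Set.Ioc (t (k + 1)) (t k)) := by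
        rw [hνIoc]
        have h1 : m k - m k / 2 ≤ m k - m (k + 1) := tsub_le_tsub_left (tmhalf k) _
        rw [ENNReal.sub_half (hmt k)] at h1
        calc (2 : ℝ≥0∞)⁻¹ = (m k)⁻¹ * (m k / 2) := by
              rw [div_eq_mul_inv, ← mul_assoc, ENNReal.inv_mul_cancel (hm0 k) (hmt k), one_mul]
          _ ≤ (m k)⁻¹ * (m k - m (k + 1)) := mul_le_mul_right h1 _
      refine le_trans hlow ?_
      have hconst : ∫⁻ _ in Set.Ioc (t (k + 1)) (t k), (m k)⁻¹ ∂ν =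
          (m k)⁻¹ * ν (Set.Ioc (t (k + 1)) (t k)) := setLIntegral_const _ _
      rw [← hconst]
      apply setLIntegral_mono' measurableSet_Ioc
      intro s hs
      rw [hlevel k s hs.1 hs.2]
      exact le_trans (hr0 k) (measure_mono (Metric.closedBall_subset_closedBall (hrk k)))
    have hsub : (⋃ k, Set.Ioc (t (k + 1)) (t k)) ⊆ Set.Ioi (0:ℝ) := by
      intro x hx
      obtain ⟨k, hk⟩ := Set.mem_iUnion.1 hx
      exact lt_trans (tpos (k + 1)) hk.1
    rw [← top_le_iff]
    calc (⊤ : ℝ≥0∞) = ∑' _ : ℕ, (2 : ℝ≥0∞)⁻¹ :=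
          (ENNReal.tsum_const_eq_top_of_ne_zero (by norm_num)).symm
      _ ≤ ∑' k : ℕ, ∫⁻ s in Set.Ioc (t (k + 1)) (t k), volume {x | s ≤ f x} ∂ν :=
          ENNReal.tsum_le_tsum hterm
      _ = ∫⁻ s in ⋃ k, Set.Ioc (t (k + 1)) (t k), volume {x | s ≤ f x} ∂ν :=
          (lintegral_iUnion (fun k => measurableSet_Ioc) hdisj _).symm
      _ ≤ ∫⁻ s in Set.Ioi (0:ℝ), volume {x | s ≤ f x} ∂ν := lintegral_mono_set hsub

  · rintro ⟨δ, hδ, hν0⟩ f hf'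
    have hf : (∀ x, 0 ≤ f x) ∧ ∀ t : ℝ, 0 < t →
        {x | t ≤ f x} = ∅ ∨ (IsCompact {x | t ≤ f x} ∧ Convex ℝ {x | t ≤ f x}) := hf'
    -- there is a threshold T above which levels are empty
    have hT : ∃ T : ℝ, 0 < T ∧ {x | T ≤ f x} = ∅ := by
      by_contra h
      push_neg at h
      have hne : ∀ n : ℕ, {x | ((n : ℝ) + 1) ≤ f x}.Nonempty := fun n =>
        h _ (by positivity)
      have hcomp : ∀ n : ℕ, IsCompact {x | ((n : ℝ) + 1) ≤ f x} := by
        intro n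
        rcases hf.2 _ (by positivity : (0:ℝ) < (n : ℝ) + 1) with h0 | h1
        · exact absurd h0 (Set.nonempty_iff_ne_empty.1 (hne n) : _)
        · exact h1.1
      have hcl : ∀ n : ℕ, IsClosed {x | ((n : ℝ) + 1) ≤ f x} := fun n => (hcomp n).isClosed
      have hsub : ∀ n : ℕ, {x | ((n : ℝ) + 1 + 1) ≤ f x} ⊆ {x | ((n : ℝ) + 1) ≤ f x} := by
        intro n x hx
        simp only [Set.mem_setOf_eq] at hx ⊢
        push_cast at hx ⊢
        linarith
      obtain ⟨x, hx⟩ := IsCompact.nonempty_iInter_of_sequence_nonempty_isCompact_isClosed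
        (fun n => {x | ((n : ℝ) + 1) ≤ f x})
        (by intro n; exact_mod_cast hsub n) hne (hcomp 0) hcl
      simp only [Set.mem_iInter, Set.mem_setOf_eq] at hx
      obtain ⟨n, hn⟩ := exists_nat_gt (f x)
      have := hx n
      linarith
    obtain ⟨T, hT0, hTe⟩ := hT
    -- the δ-level set has finite volume
    have hC : volume {x | δ ≤ f x} ≠ ⊤ := by
      rcases hf.2 δ hδ with h0 | h1
      · rw [h0]; simp
      · exact h1.1.measure_lt_top.ne
    set C : ℝ≥0∞ := volume {x | δ ≤ f x} with hC_def
    have hsplit : (∫⁻ t in Set.Ioi (0:ℝ), volume {x | t ≤ f x} ∂ν) =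
        (∫⁻ t in Set.Ioc (0:ℝ) δ, volume {x | t ≤ f x} ∂ν) +
        (∫⁻ t in Set.Ioi δ, volume {x | t ≤ f x} ∂ν) := by
      rw [← lintegral_union measurableSet_Ioi]
      · rw [Set.Ioc_union_Ioi_eq_Ioi hδ.le]
      · exact Set.disjoint_left.2 fun x hx1 hx2 => absurd hx1.2 (not_le.2 hx2)
    rw [hsplit]
    have h1 : (∫⁻ t in Set.Ioc (0:ℝ) δ, volume {x | t ≤ f x} ∂ν) = 0 :=
      setLIntegral_measure_zero _ _ (measure_mono_null Set.Ioc_subset_Icc_self hν0)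
    have h2 : (∫⁻ t in Set.Ioi δ, volume {x | t ≤ f x} ∂ν) ≤ C * ν (Set.Ioc δ T) := by
      calc (∫⁻ t in Set.Ioi δ, volume {x | t ≤ f x} ∂ν)
          ≤ ∫⁻ t in Set.Ioi δ, (Set.Ioc δ T).indicator (fun _ => C) t ∂ν := by
            apply setLIntegral_mono' measurableSet_Ioi
            intro t ht
            by_cases hT' : t ≤ T
            · rw [Set.indicator_of_mem (Set.mem_Ioc.2 ⟨Set.mem_Ioi.1 ht, hT'⟩)]
              exact measure_mono fun x hx => le_trans (le_of_lt (Set.mem_Ioi.1 ht)) hx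
            · rw [Set.indicator_of_notMem (fun hmem => hT' hmem.2)]
              have hsub : {x | t ≤ f x} ⊆ {x | T ≤ f x} :=
                fun x hx => le_trans (not_le.1 hT').le hx
              rw [measure_mono_null hsub (by rw [hTe]; exact measure_empty)]
        _ ≤ ∫⁻ t, (Set.Ioc δ T).indicator (fun _ => C) t ∂ν := setLIntegral_le_lintegral _ _
        _ = C * ν (Set.Ioc δ T) := by
            rw [lintegral_indicator measurableSet_Ioc, setLIntegral_const]
    rw [h1, zero_add]
    apply ne_top_of_le_ne_top _ h2
    exact ENNReal.mul_ne_top hC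
      (ne_top_of_le_ne_top (hRadon _ isCompact_Icc) (measure_mono Set.Ioc_subset_Icc_self))


end
end

section
/- Let μ be an invariant, continuous and simple valuation on C^N and let φ : [0,∞) → ℝ be a function such that μ(t·1_K) = φ(t)·vol_N(K) for every t ≥ 0 and every convex body K. Then for every simple function f = (t_1·1_{K_1}) ∨ ⋯ ∨ (t_m·1_{K_m}), where 0 < t_1 < ⋯ < t_m and K_1 ⊇ K_2 ⊇ ⋯ ⊇ K_m are convex bodies, one has μ(f) = Σ_{i=1}^{m−1} φ(t_i)(vol_N(K_i) − vol_N(K_{i+1})) + φ(t_m) vol_N(K_m). -/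
open Filter Topology MeasureTheory

noncomputable section

/-- A convex body in `ℝ^N` is a nonempty compact convex subset. -/
def IsConvexBody {N : ℕ} (K : Set (EuclideanSpace ℝ (Fin N))) : Prop :=
  K.Nonempty ∧ IsCompact K ∧ Convex ℝ K

lemma qc_indicator {N : ℕ} {K : Set (EuclideanSpace ℝ (Fin N))} {c : ℝ}
    (hc : 0 ≤ c) (hK : IsConvexBody K) :
    QuasiConcave (K.indicator fun _ => c) := by
  refine ⟨fun x => Set.indicator_nonneg (fun _ _ => hc) x, fun s hs => ?_⟩
  by_cases h : s ≤ c
  · right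
    have hset : {x | s ≤ K.indicator (fun _ => c) x} = K := by
      ext x
      by_cases hx : x ∈ K
      · simp [Set.indicator_of_mem hx, hx, h]
      · simp only [Set.mem_setOf_eq, Set.indicator_of_notMem hx]
        constructor
        · intro hcon; linarith
        · intro hcon; exact absurd hcon hx
    rw [hset]; exact ⟨hK.2.1, hK.2.2⟩
  · left
    ext x
    simp only [Set.mem_setOf_eq, Set.mem_empty_iff_false, iff_false, not_le]
    by_cases hx : x ∈ K
    · rw [Set.indicator_of_mem hx]; exact lt_of_not_ge h
    · rw [Set.indicator_of_notMem hx]; exact hs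

lemma qc_sup {N n : ℕ} (hn : 0 < n) (t : ℕ → ℝ)
    (K : ℕ → Set (EuclideanSpace ℝ (Fin N)))
    (ht : ∀ i, i < n → 0 < t i)
    (hKbody : ∀ i, i < n → IsConvexBody (K i))
    (hchain : ∀ j, j < n → ∀ i, i ≤ j → K j ⊆ K i) :
    QuasiConcave (fun x => (Finset.range n).sup'
      (Finset.nonempty_range_iff.mpr hn.ne') fun i => (K i).indicator (fun _ => t i) x) := by
  classical
  constructor
  · intro x
    dsimp only
    exact le_trans (Set.indicator_nonneg (fun _ _ => (ht 0 hn).le) x)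
      (Finset.le_sup' (fun i => (K i).indicator (fun _ => t i) x)
        (Finset.mem_range.mpr hn))
  · intro s hs
    set S := (Finset.range n).filter (fun i => s ≤ t i) with hSdef
    by_cases hSne : S.Nonempty
    · right
      set j := S.min' hSne with hj
      have hjS : j ∈ S := S.min'_mem hSne
      have hjn : j < n := Finset.mem_range.mp (Finset.mem_filter.mp hjS).1
      have hjt : s ≤ t j := (Finset.mem_filter.mp hjS).2
      have hset : {x | s ≤ (Finset.range n).sup'
          (Finset.nonempty_range_iff.mpr hn.ne')
          fun i => (K i).indicator (fun _ => t i) x} = K j := by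
        ext x
        simp only [Set.mem_setOf_eq]
        rw [Finset.le_sup'_iff]
        constructor
        · rintro ⟨i, hi, hix⟩
          have hin : i < n := Finset.mem_range.mp hi
          by_cases hx : x ∈ K i
          · have hti : s ≤ t i := by rwa [Set.indicator_of_mem hx] at hix
            have hiS : i ∈ S := Finset.mem_filter.mpr ⟨hi, hti⟩
            exact hchain i hin j (S.min'_le i hiS) hx
          · rw [Set.indicator_of_notMem hx] at hix; linarith
        · intro hx
          exact ⟨j, Finset.mem_range.mpr hjn, by rw [Set.indicator_of_mem hx]; exact hjt⟩
      rw [hset]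
      exact ⟨(hKbody j hjn).2.1, (hKbody j hjn).2.2⟩
    · left
      ext x
      simp only [Set.mem_setOf_eq, Set.mem_empty_iff_false, iff_false]
      rw [Finset.le_sup'_iff]
      rintro ⟨i, hi, hix⟩
      by_cases hx : x ∈ K i
      · have hti : s ≤ t i := by rwa [Set.indicator_of_mem hx] at hix
        exact hSne ⟨i, Finset.mem_filter.mpr ⟨hi, hti⟩⟩
      · rw [Set.indicator_of_notMem hx] at hix; linarith

/-- If `μ` is an invariant, continuous and simple valuation on `C^N` and `φ` satisfies
`μ(t·1_K) = φ(t)·vol_N(K)` for all `t ≥ 0` and convex bodies `K`, then the value of `μ`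
at the simple function `(t_1·1_{K_1}) ∨ ⋯ ∨ (t_m·1_{K_m})` (with `0 < t_1 < ⋯ < t_m`
and `K_1 ⊇ ⋯ ⊇ K_m` convex bodies) is
`Σ_{i=1}^{m−1} φ(t_i)(vol_N(K_i) − vol_N(K_{i+1})) + φ(t_m) vol_N(K_m)`. -/
theorem simple_valuation_on_simple_functions {N : ℕ}
    (μ : (EuclideanSpace ℝ (Fin N) → ℝ) → ℝ)
    (hval : IsValuation μ) (hinv : IsInvariantVal μ)
    (hcont : IsContinuousVal μ) (hsimple : IsSimpleVal μ)
    (φ : ℝ → ℝ)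
    (hφ : ∀ t : ℝ, 0 ≤ t → ∀ K : Set (EuclideanSpace ℝ (Fin N)), IsConvexBody K →
      μ (K.indicator fun _ => t) = φ t * (volume K).toReal)
    (m : ℕ) (hm : 0 < m)
    (t : ℕ → ℝ) (K : ℕ → Set (EuclideanSpace ℝ (Fin N)))
    (ht0 : 0 < t 0)
    (hts : ∀ i : ℕ, i + 1 < m → t i < t (i + 1))
    (hKbody : ∀ i : ℕ, i < m → IsConvexBody (K i))
    (hKdec : ∀ i : ℕ, i + 1 < m → K (i + 1) ⊆ K i) :
    μ (fun x => (Finset.range m).sup' (Finset.nonempty_range_iff.mpr hm.ne')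
        fun i => (K i).indicator (fun _ => t i) x) =
      (∑ i ∈ Finset.range (m - 1),
        φ (t i) * ((volume (K i)).toReal - (volume (K (i + 1))).toReal)) +
      φ (t (m - 1)) * (volume (K (m - 1))).toReal := by
  classical
  have tpos : ∀ i, i < m → 0 < t i := by
    intro i
    induction i with
    | zero => intro _; exact ht0
    | succ k ih => intro hk; exact (ih (by omega)).trans (hts k hk)
  have tmono : ∀ j, j < m → ∀ i, i ≤ j → t i ≤ t j := by
    intro j
    induction j with
    | zero => intro _ i hi; obtain rfl := Nat.le_zero.mp hi; exact le_rfl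
    | succ k ih =>
      intro hk i hi
      rcases Nat.eq_or_lt_of_le hi with h | h
      · rw [h]
      · exact (ih (by omega) i (by omega)).trans (hts k hk).le
  have hchain : ∀ j, j < m → ∀ i, i ≤ j → K j ⊆ K i := by
    intro j
    induction j with
    | zero => intro _ i hi; obtain rfl := Nat.le_zero.mp hi; exact subset_rfl
    | succ k ih =>
      intro hk i hi
      rcases Nat.eq_or_lt_of_le hi with h | h
      · rw [h]
      · exact (hKdec k hk).trans (ih (by omega) i (by omega))
  have key : ∀ k, k + 1 ≤ m →
      μ (fun x => (Finset.range (k + 1)).sup'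
          (Finset.nonempty_range_iff.mpr (Nat.succ_ne_zero k))
          fun i => (K i).indicator (fun _ => t i) x) =
        (∑ i ∈ Finset.range k,
          φ (t i) * ((volume (K i)).toReal - (volume (K (i + 1))).toReal)) +
        φ (t k) * (volume (K k)).toReal := by
    intro k
    induction k with
    | zero =>
      intro hk1
      have hfun : (fun x => (Finset.range 1).sup'
          (Finset.nonempty_range_iff.mpr (Nat.succ_ne_zero 0))
          fun i => (K i).indicator (fun _ => t i) x)
          = (K 0).indicator (fun _ => t 0) := by
        funext x
        simp [Finset.range_one]
      rw [hfun, hφ (t 0) ht0.le (K 0) (hKbody 0 hk1)]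
      simp
    | succ k ih =>
      intro hk2
      have hk1 : k + 1 ≤ m := by omega
      have hkm : k + 1 < m := hk2
      set F := fun x => (Finset.range (k + 1)).sup'
          (Finset.nonempty_range_iff.mpr (Nat.succ_ne_zero k))
          fun i => (K i).indicator (fun _ => t i) x with hF
      set g := (K (k + 1)).indicator (fun _ => t (k + 1)) with hg
      have hFqc : QuasiConcave F :=
        qc_sup (Nat.succ_pos k) t K (fun i hi => tpos i (by omega))
          (fun i hi => hKbody i (by omega))
          (fun j hj i hi => hchain j (by omega) i hi)
      have hgqc : QuasiConcave g :=
        qc_indicator (tpos (k + 1) hkm).le (hKbody (k + 1) hkm)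
      have hmaxeq : (fun x => max (F x) (g x))
          = fun x => (Finset.range (k + 2)).sup'
            (Finset.nonempty_range_iff.mpr (Nat.succ_ne_zero (k + 1)))
            fun i => (K i).indicator (fun _ => t i) x := by
        funext x
        rw [Finset.sup'_congr (Finset.nonempty_range_iff.mpr (Nat.succ_ne_zero (k + 1)))
            Finset.range_add_one (fun _ _ => rfl),
          Finset.sup'_insert (Finset.nonempty_range_iff.mpr (Nat.succ_ne_zero k))]
        exact max_comm _ _
      have hmaxqc : QuasiConcave (fun x => max (F x) (g x)) := by
        rw [hmaxeq]
        exact qc_sup (Nat.succ_pos (k + 1)) t K (fun i hi => tpos i (by omega))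
          (fun i hi => hKbody i (by omega))
          (fun j hj i hi => hchain j (by omega) i hi)
      have hmineq : (fun x => min (F x) (g x))
          = (K (k + 1)).indicator (fun _ => t k) := by
        funext x
        by_cases hx : x ∈ K (k + 1)
        · have hgx : g x = t (k + 1) := Set.indicator_of_mem hx _
          have hFx : F x = t k := by
            apply le_antisymm
            · apply Finset.sup'_le
              intro i hi
              have hin : i < k + 1 := Finset.mem_range.mp hi
              have hxi : x ∈ K i := hchain (k + 1) hkm i (by omega) hx
              rw [Set.indicator_of_mem hxi]
              exact tmono k (by omega) i (by omega)
            · have hxk : x ∈ K k := hchain (k + 1) hkm k (by omega) hx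
              have := Finset.le_sup' (f := fun i => (K i).indicator
                (fun _ : EuclideanSpace ℝ (Fin N) => t i) x)
                (Finset.self_mem_range_succ k)
              rwa [Set.indicator_of_mem hxk] at this
          rw [hFx, hgx, Set.indicator_of_mem hx]
          exact min_eq_left (tmono (k + 1) hkm k (by omega))
        · have hgx : g x = 0 := Set.indicator_of_notMem hx _
          rw [hgx, Set.indicator_of_notMem hx]
          exact min_eq_right (hFqc.1 x)
      have step := hval.2 F g hFqc hgqc hmaxqc
      rw [hmaxeq, hmineq] at step
      have hμg : μ g = φ (t (k + 1)) * (volume (K (k + 1))).toReal :=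
        hφ (t (k + 1)) (tpos (k + 1) hkm).le (K (k + 1)) (hKbody (k + 1) hkm)
      have hμmin : μ ((K (k + 1)).indicator (fun _ => t k)) =
          φ (t k) * (volume (K (k + 1))).toReal :=
        hφ (t k) (tpos k (by omega)).le (K (k + 1)) (hKbody (k + 1) hkm)
      have hμF := ih hk1
      rw [hμmin, hμg, hμF] at step
      rw [Finset.sum_range_succ]
      linarith
  obtain ⟨k, rfl⟩ : ∃ k, m = k + 1 := ⟨m - 1, (Nat.succ_pred_eq_of_pos hm).symm⟩
  simp only [Nat.add_sub_cancel]
  exact key k le_rfl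

end
end
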